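/- arXiv:2005.05001 — 5 statements merged into one kernel-verified Lean document; each statement's English description precedes it below -/
import Mathlib

section
/- Let (E, ℰ, μ) be a measurable space with probability measure μ, let β ∈ (0,1), let Q_β be a Sibuya random variable with parameter β, and let (U_i)_{i≥1} be i.i.d. E-valued random elements with law μ, independent of Q_β. Then for every measurable set K ⊆ E, P(∃ i ∈ {1,…,Q_β} with U_i ∈ K) = μ(K)^β. -/
set_option maxHeartbeats 1000000
open MeasureTheory ProbabilityTheory

/-- The Sibuya probability mass function with parameter `β`:
`p_k^{(β)} = β Γ(k−β) / (Γ(1−β) Γ(k+1))` for `k ∈ ℕ = {1,2,…}`. -/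
noncomputable def sibuya (β : ℝ) (k : ℕ) : ℝ :=
  β * Real.Gamma ((k : ℝ) - β) / (Real.Gamma (1 - β) * Real.Gamma ((k : ℝ) + 1))

noncomputable def gg (β : ℝ) (k : ℕ) : ℝ :=
  Real.Gamma ((k : ℝ) + 1 - β) / (Real.Gamma (1 - β) * (Nat.factorial k : ℝ))

lemma gg_zero (β : ℝ) (hβ1 : β < 1) : gg β 0 = 1 := by
  have h : Real.Gamma (1 - β) ≠ 0 := (Real.Gamma_pos_of_pos (by linarith)).ne'
  simp [gg, div_eq_one_iff_eq, h]

lemma gg_pos (β : ℝ) (hβ1 : β < 1) (k : ℕ) : 0 < gg β k := by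
  have h0 : (0:ℝ) < (k : ℝ) + 1 - β := by
    have : (0:ℝ) ≤ (k : ℝ) := Nat.cast_nonneg k
    linarith
  exact div_pos (Real.Gamma_pos_of_pos h0)
    (mul_pos (Real.Gamma_pos_of_pos (by linarith))
      (by exact_mod_cast Nat.factorial_pos k))

lemma gg_succ (β : ℝ) (hβ1 : β < 1) (k : ℕ) :
    gg β (k + 1) = (((k : ℝ) + 1 - β) / ((k : ℝ) + 1)) * gg β k := by
  have hne : (k : ℝ) + 1 - β ≠ 0 := by
    have : (0:ℝ) ≤ (k : ℝ) := Nat.cast_nonneg k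
    intro h; linarith
  have h2 : Real.Gamma (((k : ℝ) + 1 - β) + 1) = ((k : ℝ) + 1 - β) * Real.Gamma ((k : ℝ) + 1 - β) :=
    Real.Gamma_add_one hne
  have hΓ : Real.Gamma (1 - β) ≠ 0 := (Real.Gamma_pos_of_pos (by linarith)).ne'
  have hfac : ((k + 1).factorial : ℝ) = ((k:ℝ) + 1) * (k.factorial : ℝ) := by
    rw [Nat.factorial_succ]; push_cast; ring
  have hk1 : ((k:ℝ) + 1) ≠ 0 := by positivity
  have hfne : (k.factorial : ℝ) ≠ 0 := by exact_mod_cast (Nat.factorial_pos k).ne'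
  unfold gg
  rw [show ((k + 1 : ℕ) : ℝ) + 1 - β = ((k : ℝ) + 1 - β) + 1 by push_cast; ring, h2, hfac]
  field_simp

lemma gg_mono (β : ℝ) (hβ0 : 0 < β) (hβ1 : β < 1) (k : ℕ) : gg β (k + 1) ≤ gg β k := by
  rw [gg_succ β hβ1 k]
  have hk1 : (0:ℝ) < (k : ℝ) + 1 := by positivity
  have h1 : ((k : ℝ) + 1 - β) / ((k : ℝ) + 1) ≤ 1 := by
    rw [div_le_one hk1]; linarith
  nlinarith [gg_pos β hβ1 k, (gg_pos β hβ1 k).le]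

lemma gg_le_one (β : ℝ) (hβ0 : 0 < β) (hβ1 : β < 1) (k : ℕ) : gg β k ≤ 1 := by
  induction k with
  | zero => exact (gg_zero β hβ1).le
  | succ n ih => exact le_trans (gg_mono β hβ0 hβ1 n) ih

lemma gg_le_exp (β : ℝ) (hβ0 : 0 < β) (hβ1 : β < 1) (k : ℕ) :
    gg β k ≤ Real.exp (-β * ∑ i ∈ Finset.range k, (1 : ℝ) / ((i : ℝ) + 1)) := by
  induction k with
  | zero => simp [gg_zero β hβ1]
  | succ n ih =>
      rw [gg_succ β hβ1 n, Finset.sum_range_succ]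
      have hk1 : (0:ℝ) < (n : ℝ) + 1 := by positivity
      have hratio : ((n : ℝ) + 1 - β) / ((n : ℝ) + 1) ≤ Real.exp (-β * (1 / ((n:ℝ) + 1))) := by
        have h1 : ((n : ℝ) + 1 - β) / ((n : ℝ) + 1) = 1 + (-β * (1 / ((n:ℝ) + 1))) := by
          field_simp
          ring
        rw [h1]
        have := Real.add_one_le_exp (-β * (1 / ((n:ℝ) + 1)))
        linarith
      have hratio0 : 0 ≤ ((n : ℝ) + 1 - β) / ((n : ℝ) + 1) := by
        apply div_nonneg _ hk1.le; linarith
      calc ((n : ℝ) + 1 - β) / ((n : ℝ) + 1) * gg β n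
          ≤ Real.exp (-β * (1 / ((n:ℝ) + 1))) * Real.exp (-β * ∑ i ∈ Finset.range n, (1:ℝ) / ((i:ℝ) + 1)) := by
            apply mul_le_mul hratio ih (gg_pos β hβ1 n).le (Real.exp_pos _).le
        _ = Real.exp (-β * (1 / ((n:ℝ) + 1)) + -β * ∑ i ∈ Finset.range n, (1:ℝ) / ((i:ℝ) + 1)) :=
            (Real.exp_add _ _).symm
        _ = Real.exp (-β * (∑ i ∈ Finset.range n, (1:ℝ) / ((i:ℝ) + 1) + 1 / ((n:ℝ) + 1))) := by
            congr 1; ring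
  
lemma gg_tendsto_zero (β : ℝ) (hβ0 : 0 < β) (hβ1 : β < 1) :
    Filter.Tendsto (fun k => gg β k) Filter.atTop (nhds 0) := by
  apply squeeze_zero (fun k => (gg_pos β hβ1 k).le) (gg_le_exp β hβ0 hβ1)
  apply Real.tendsto_exp_atBot.comp
  have h1 : Filter.Tendsto (fun k : ℕ => β * ∑ i ∈ Finset.range k, (1:ℝ) / ((i:ℝ) + 1))
      Filter.atTop Filter.atTop :=
    Filter.Tendsto.const_mul_atTop hβ0 Real.tendsto_sum_range_one_div_nat_succ_atTop
  have h2 := Filter.tendsto_neg_atTop_atBot.comp h1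
  refine h2.congr (fun k => ?_)
  simp only [Function.comp_apply]; ring

lemma sibuya_succ (β : ℝ) (hβ1 : β < 1) (k : ℕ) :
    sibuya β (k + 1) = gg β k - gg β (k + 1) := by
  rw [gg_succ β hβ1 k]
  have hΓ2 : Real.Gamma (((k:ℝ) + 1) + 1) = (((k+1).factorial : ℕ) : ℝ) := by
    rw [show (k:ℝ) + 1 + 1 = ((k+1 : ℕ) : ℝ) + 1 by push_cast; ring]
    exact Real.Gamma_nat_eq_factorial (k+1)
  have hfac : (((k+1).factorial : ℕ) : ℝ) = ((k:ℝ) + 1) * (k.factorial : ℝ) := by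
    rw [Nat.factorial_succ]; push_cast; ring
  have hΓ : Real.Gamma (1 - β) ≠ 0 := (Real.Gamma_pos_of_pos (by linarith)).ne'
  have hk1 : ((k:ℝ) + 1) ≠ 0 := by positivity
  have hfne : (k.factorial : ℝ) ≠ 0 := by exact_mod_cast (Nat.factorial_pos k).ne'
  unfold sibuya gg
  rw [show ((k+1 : ℕ) : ℝ) - β = (k:ℝ) + 1 - β by push_cast; ring,
    show ((k+1 : ℕ) : ℝ) + 1 = (k:ℝ) + 1 + 1 by push_cast; ring, hΓ2, hfac]
  field_simp
  ring

lemma sibuya_succ_nonneg (β : ℝ) (hβ0 : 0 < β) (hβ1 : β < 1) (k : ℕ) :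
    0 ≤ sibuya β (k + 1) := by
  rw [sibuya_succ β hβ1 k]
  linarith [gg_mono β hβ0 hβ1 k]

lemma summable_aux {x : ℝ} (hx1 : |x| < 1) :
    Summable (fun n : ℕ => (n : ℝ) * |x| ^ (n - 1)) := by
  rw [← summable_nat_add_iff 1]
  have h := (summable_pow_mul_geometric_of_norm_lt_one 1 (by rwa [Real.norm_eq_abs, abs_abs]) :
    Summable fun n : ℕ => (n:ℝ) ^ 1 * |x| ^ n)
  have h2 := h.add (summable_geometric_of_lt_one (abs_nonneg x) hx1)
  refine h2.congr fun n => ?_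
  simp only [pow_one, Nat.add_sub_cancel]
  push_cast
  ring

lemma summable_gg_pow (β : ℝ) (hβ0 : 0 < β) (hβ1 : β < 1) {x : ℝ} (hx : |x| < 1) :
    Summable (fun n : ℕ => gg β n * x ^ n) := by
  apply Summable.of_norm
  refine Summable.of_nonneg_of_le (fun n => norm_nonneg _) (fun n => ?_)
    (summable_geometric_of_lt_one (abs_nonneg x) hx)
  calc ‖gg β n * x ^ n‖ = gg β n * |x| ^ n := by
        rw [norm_mul, Real.norm_eq_abs, Real.norm_eq_abs, abs_pow,
          abs_of_nonneg (gg_pos β hβ1 n).le]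
    _ ≤ 1 * |x| ^ n := mul_le_mul_of_nonneg_right (gg_le_one β hβ0 hβ1 n)
        (pow_nonneg (abs_nonneg x) n)
    _ = |x| ^ n := one_mul _

lemma summable_gg_deriv (β : ℝ) (hβ0 : 0 < β) (hβ1 : β < 1) {x : ℝ} (hx : |x| < 1) :
    Summable (fun n : ℕ => gg β n * ((n : ℝ) * x ^ (n - 1))) := by
  apply Summable.of_norm
  refine Summable.of_nonneg_of_le (fun n => norm_nonneg _) (fun n => ?_) (summable_aux hx)
  calc ‖gg β n * ((n:ℝ) * x ^ (n-1))‖ = gg β n * ((n:ℝ) * |x| ^ (n-1)) := by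
        rw [norm_mul, norm_mul, Real.norm_eq_abs, Real.norm_eq_abs, Real.norm_eq_abs, abs_pow,
          abs_of_nonneg (gg_pos β hβ1 n).le, abs_of_nonneg (Nat.cast_nonneg n)]
    _ ≤ 1 * ((n:ℝ) * |x| ^ (n-1)) := mul_le_mul_of_nonneg_right (gg_le_one β hβ0 hβ1 n)
        (by positivity)
    _ = (n:ℝ) * |x| ^ (n-1) := one_mul _

lemma hasSum_gg (β : ℝ) (hβ0 : 0 < β) (hβ1 : β < 1) {r : ℝ} (hr0 : 0 ≤ r) (hr1 : r < 1) :
    HasSum (fun n => gg β n * r ^ n) ((1 - r) ^ (β - 1)) := by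
  set F : ℝ → ℝ := fun x => ∑' n : ℕ, gg β n * x ^ n with hFdef
  set D : ℝ → ℝ := fun x => ∑' n : ℕ, gg β n * ((n : ℝ) * x ^ (n - 1)) with hDdef
  set ρ : ℝ := (r + 1) / 2 with hρdef
  have hρ0 : 0 < ρ := by rw [hρdef]; linarith
  have hρ1 : ρ < 1 := by rw [hρdef]; linarith
  have hrρ : r < ρ := by rw [hρdef]; linarith
  have hρa : |ρ| < 1 := by rwa [abs_of_pos hρ0]
  -- derivative of F
  have hderiv : ∀ x ∈ Set.Ioo (-ρ) ρ, HasDerivAt F (D x) x := by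
    intro x hx
    refine hasDerivAt_tsum_of_isPreconnected (y₀ := 0) (summable_aux hρa) isOpen_Ioo
      (convex_Ioo _ _).isPreconnected
      (fun n y _ => (hasDerivAt_pow n y).const_mul (gg β n)) ?_ ?_ ?_ hx
    · intro n y hy
      have hyρ : |y| ≤ ρ := by
        rw [abs_le]; exact ⟨hy.1.le, hy.2.le⟩
      calc ‖gg β n * ((n:ℝ) * y ^ (n-1))‖ = gg β n * ((n:ℝ) * |y| ^ (n-1)) := by
            rw [norm_mul, norm_mul, Real.norm_eq_abs, Real.norm_eq_abs, Real.norm_eq_abs, abs_pow,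
              abs_of_nonneg (gg_pos β hβ1 n).le, abs_of_nonneg (Nat.cast_nonneg n)]
        _ ≤ 1 * ((n:ℝ) * ρ ^ (n-1)) := by
            apply mul_le_mul (gg_le_one β hβ0 hβ1 n)
            · exact mul_le_mul_of_nonneg_left (pow_le_pow_left₀ (abs_nonneg y) hyρ _)
                (Nat.cast_nonneg n)
            · positivity
            · norm_num
        _ = (n:ℝ) * ρ ^ (n-1) := one_mul _
        _ = (n:ℝ) * |ρ| ^ (n-1) := by rw [abs_of_pos hρ0]
    · exact Set.mem_Ioo.mpr ⟨by linarith, hρ0⟩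
    · exact summable_gg_pow β hβ0 hβ1 (by simp)
  -- key algebraic identity
  have hkey : ∀ x : ℝ, 0 ≤ x → x < 1 → (1 - x) * D x = (1 - β) * F x := by
    intro x hx0 hx1
    have hxa : |x| < 1 := by rwa [abs_of_nonneg hx0]
    have hDsum : HasSum (fun n : ℕ => gg β n * ((n : ℝ) * x ^ (n - 1))) (D x) :=
      (summable_gg_deriv β hβ0 hβ1 hxa).hasSum
    have hFsum : HasSum (fun n : ℕ => gg β n * x ^ n) (F x) :=
      (summable_gg_pow β hβ0 hβ1 hxa).hasSum
    have h1 : HasSum (fun n : ℕ => (n : ℝ) * (gg β n * x ^ n)) (x * D x) := by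
      have h := hDsum.mul_left x
      have hfun : (fun n : ℕ => x * (gg β n * ((n:ℝ) * x ^ (n-1))))
          = fun n : ℕ => (n:ℝ) * (gg β n * x ^ n) := by
        funext n
        cases n with
        | zero => simp
        | succ m => simp only [Nat.add_sub_cancel, pow_succ]; push_cast; ring
      rwa [hfun] at h
    have h2 : HasSum (fun n : ℕ => gg β (n+1) * (((n+1 : ℕ) : ℝ) * x ^ ((n+1) - 1))) (D x) := by
      refine (hasSum_nat_add_iff (f := fun n : ℕ => gg β n * ((n:ℝ) * x ^ (n - 1))) 1).2 ?_
      have : D x + ∑ i ∈ Finset.range 1, gg β i * ((i:ℝ) * x ^ (i-1)) = D x := by simp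
      rw [this]; exact hDsum
    have h2' : HasSum (fun n : ℕ => ((n:ℝ) + 1 - β) * (gg β n * x ^ n)) (D x) := by
      have hfun : (fun n : ℕ => gg β (n+1) * (((n+1 : ℕ) : ℝ) * x ^ ((n+1) - 1)))
          = fun n : ℕ => ((n:ℝ) + 1 - β) * (gg β n * x ^ n) := by
        funext n
        rw [gg_succ β hβ1 n]
        simp only [Nat.add_sub_cancel]
        have hk1 : ((n:ℝ) + 1) ≠ 0 := by positivity
        push_cast
        field_simp
      rwa [hfun] at h2
    have h3 := h2'.sub h1
    have hfun : (fun n : ℕ => ((n:ℝ) + 1 - β) * (gg β n * x ^ n) - (n:ℝ) * (gg β n * x ^ n))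
        = fun n : ℕ => (1 - β) * (gg β n * x ^ n) := by
      funext n; ring
    rw [hfun] at h3
    have h4 := hFsum.mul_left (1 - β)
    have := h3.unique h4
    linarith [this]
  -- ODE: Φ constant
  set Φ : ℝ → ℝ := fun x => (1 - x) ^ (1 - β) * F x with hΦdef
  have hΦderiv : ∀ x : ℝ, 0 ≤ x → x ≤ r → HasDerivAt Φ 0 x := by
    intro x hx0 hxr
    have hx1 : x < 1 := lt_of_le_of_lt hxr hr1
    have h1x : (0:ℝ) < 1 - x := by linarith
    have hxmem : x ∈ Set.Ioo (-ρ) ρ := ⟨by linarith, by linarith⟩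
    have hdF : HasDerivAt F (D x) x := hderiv x hxmem
    have hinner : HasDerivAt (fun y : ℝ => 1 - y) (-1) x := (hasDerivAt_id x).const_sub 1
    have hrpow : HasDerivAt (fun y : ℝ => (1 - y) ^ (1 - β))
        ((1 - β) * (1 - x) ^ (1 - β - 1) * (-1)) x := by
      have h := (Real.hasDerivAt_rpow_const (x := 1 - x) (p := 1 - β) (Or.inl h1x.ne')).comp
        x hinner
      exact h
    have hmul := hrpow.mul hdF
    have hval : (1 - β) * (1 - x) ^ (1 - β - 1) * (-1) * F x + (1 - x) ^ (1 - β) * D x = 0 := by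
      have e1 : (1 - β - 1) = -β := by ring
      have e2 : (1 - x) ^ (1 - β) = (1 - x) * (1 - x) ^ (-β) := by
        rw [show (1:ℝ) - β = 1 + (-β) by ring, Real.rpow_add h1x, Real.rpow_one]
      rw [e1, e2]
      have hk := hkey x hx0 hx1
      nlinarith [hk, Real.rpow_pos_of_pos h1x (-β)]
    rw [hval] at hmul
    exact hmul
  have hcont : ContinuousOn Φ (Set.Icc 0 r) := fun x hx =>
    ((hΦderiv x hx.1 hx.2).continuousAt).continuousWithinAt
  have hconst := constant_of_has_deriv_right_zero hcont
    (fun x hx => (hΦderiv x hx.1 hx.2.le).hasDerivWithinAt) r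
    (Set.mem_Icc.mpr ⟨hr0, le_rfl⟩)
  have hF0 : F 0 = 1 := by
    have hbeta : F 0 = ∑' n : ℕ, gg β n * (0:ℝ) ^ n := rfl
    rw [hbeta, tsum_eq_single 0 (fun n hn => by simp [zero_pow hn])]
    simp [gg_zero β hβ1]
  have hΦ0 : Φ 0 = 1 := by
    rw [hΦdef]; simp [hF0, Real.one_rpow]
  rw [hΦ0] at hconst
  -- extract F r
  have h1r : (0:ℝ) < 1 - r := by linarith
  have hrpos : (0:ℝ) < (1 - r) ^ (1 - β) := Real.rpow_pos_of_pos h1r _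
  have hFr : F r = (1 - r) ^ (β - 1) := by
    have : (1 - r) ^ (1 - β) * F r = 1 := hconst
    have h2 : F r = ((1 - r) ^ (1 - β))⁻¹ := by
      field_simp at this ⊢
      linarith [this]
    rw [h2, ← Real.rpow_neg h1r.le, show -(1 - β) = β - 1 by ring]
  have hs := (summable_gg_pow β hβ0 hβ1 (by rwa [abs_of_nonneg hr0])).hasSum
  rwa [show (∑' n : ℕ, gg β n * r ^ n) = F r from rfl, hFr] at hs

lemma hasSum_sibuya_one (β : ℝ) (hβ0 : 0 < β) (hβ1 : β < 1) :
    HasSum (fun k : ℕ => sibuya β (k + 1)) 1 := by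
  have hps : ∀ n : ℕ, ∑ i ∈ Finset.range n, sibuya β (i + 1) = 1 - gg β n := by
    intro n
    rw [Finset.sum_congr rfl (fun i _ => sibuya_succ β hβ1 i), Finset.sum_range_sub' (gg β) n,
      gg_zero β hβ1]
  have hsum : Summable (fun k : ℕ => sibuya β (k + 1)) := by
    apply summable_of_sum_range_le (fun n => sibuya_succ_nonneg β hβ0 hβ1 n) (c := 1)
    intro n
    rw [hps n]
    linarith [gg_pos β hβ1 n]
  rw [hsum.hasSum_iff_tendsto_nat]
  have h := Filter.Tendsto.const_sub (1:ℝ) (gg_tendsto_zero β hβ0 hβ1)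
  simp only [sub_zero] at h
  exact Filter.Tendsto.congr (fun n => (hps n).symm) h

lemma hasSum_sibuya_hit (β : ℝ) (hβ0 : 0 < β) (hβ1 : β < 1) {q : ℝ}
    (hq0 : 0 ≤ q) (hq1 : q ≤ 1) :
    HasSum (fun k : ℕ => sibuya β (k + 1) * (1 - (1 - q) ^ (k + 1))) (q ^ β) := by
  rcases eq_or_lt_of_le hq0 with hq | hq
  · simp only [← hq, sub_zero, one_pow, sub_self, mul_zero]
    rw [Real.zero_rpow hβ0.ne']
    exact hasSum_zero
  · set r : ℝ := 1 - q with hrdef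
    have hr0 : 0 ≤ r := by rw [hrdef]; linarith
    have hr1 : r < 1 := by rw [hrdef]; linarith
    have h1q : (0:ℝ) < 1 - r := by rw [hrdef]; linarith
    have hg := hasSum_gg β hβ0 hβ1 hr0 hr1
    have h1 : HasSum (fun n : ℕ => gg β n * r ^ (n + 1)) (r * (1 - r) ^ (β - 1)) := by
      have h := hg.mul_left r
      have hfun : (fun n : ℕ => r * (gg β n * r ^ n)) = fun n : ℕ => gg β n * r ^ (n + 1) := by
        funext n; rw [pow_succ]; ring
      rwa [hfun] at h
    have h2 : HasSum (fun n : ℕ => gg β (n + 1) * r ^ (n + 1)) ((1 - r) ^ (β - 1) - 1) := by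
      refine (hasSum_nat_add_iff (f := fun n : ℕ => gg β n * r ^ n) 1).2 ?_
      have he : (1 - r) ^ (β - 1) - 1 + ∑ i ∈ Finset.range 1, gg β i * r ^ i
          = (1 - r) ^ (β - 1) := by
        simp [gg_zero β hβ1]
      rw [he]; exact hg
    have h3 := h1.sub h2
    have hfun3 : (fun n : ℕ => gg β n * r ^ (n + 1) - gg β (n + 1) * r ^ (n + 1))
        = fun n : ℕ => sibuya β (n + 1) * r ^ (n + 1) := by
      funext n; rw [sibuya_succ β hβ1 n]; ring
    rw [hfun3] at h3
    have h4 := (hasSum_sibuya_one β hβ0 hβ1).sub h3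
    have hfun4 : (fun n : ℕ => sibuya β (n + 1) - sibuya β (n + 1) * r ^ (n + 1))
        = fun n : ℕ => sibuya β (n + 1) * (1 - r ^ (n + 1)) := by
      funext n; ring
    rw [hfun4] at h4
    have hval : 1 - (r * (1 - r) ^ (β - 1) - ((1 - r) ^ (β - 1) - 1)) = q ^ β := by
      have hq' : (1:ℝ) - r = q := by rw [hrdef]; ring
      have : q ^ β = q ^ (β - 1) * q := by
        conv_lhs => rw [show β = (β - 1) + 1 by ring]
        rw [Real.rpow_add hq, Real.rpow_one]
      rw [hq'] at *
      rw [this]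
      ring
    rwa [hval] at h4

/-- Let `μ` be a probability measure on `E`, `β ∈ (0,1)`, `Q_β` a Sibuya random variable
with parameter `β`, and `(U_i)_{i≥1}` i.i.d. `E`-valued random elements with law `μ`,
independent of `Q_β`.  Then for every measurable `K ⊆ E`,
`P(∃ i ∈ {1,…,Q_β}, U_i ∈ K) = μ(K)^β`. -/
theorem sibuya_sampled_hitting_probability
    (β : ℝ) (hβ : β ∈ Set.Ioo (0:ℝ) 1)
    {Ω : Type*} [MeasurableSpace Ω] (P : Measure Ω) [IsProbabilityMeasure P]
    {E : Type*} [MeasurableSpace E] (μ : Measure E) [IsProbabilityMeasure μ]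
    (Q : Ω → ℕ) (hQmeas : Measurable Q)
    (hQ0 : P {ω | Q ω = 0} = 0)
    (hQlaw : ∀ k : ℕ, 1 ≤ k → P {ω | Q ω = k} = ENNReal.ofReal (sibuya β k))
    (U : ℕ → Ω → E) (hUmeas : ∀ i, Measurable (U i))
    (hUiid : iIndepFun U P)
    (hUlaw : ∀ i, Measure.map (U i) P = μ)
    (hindep : IndepFun Q (fun ω i => U i ω) P)
    (K : Set E) (hK : MeasurableSet K) :
    P {ω | ∃ i, 1 ≤ i ∧ i ≤ Q ω ∧ U i ω ∈ K} = μ K ^ β := by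
  obtain ⟨hβ0, hβ1⟩ := hβ
  set V : Ω → (ℕ → E) := fun ω i => U i ω with hVdef
  have hVmeas : Measurable V := measurable_pi_iff.mpr hUmeas
  set S : ℕ → Set (ℕ → E) := fun n => ⋃ i ∈ Finset.Icc 1 n, (fun f : ℕ → E => f i) ⁻¹' K
    with hSdef
  have hSmeas : ∀ n, MeasurableSet (S n) := fun n =>
    MeasurableSet.biUnion (Finset.countable_toSet _) (fun i _ => (measurable_pi_apply i) hK)
  -- real quantities
  have hKtop : μ K ≠ ⊤ := (measure_lt_top μ K).ne
  set q : ℝ := (μ K).toReal with hqdef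
  have hq0 : 0 ≤ q := ENNReal.toReal_nonneg
  have hq1 : q ≤ 1 := by
    simpa using ENNReal.toReal_mono ENNReal.one_ne_top (prob_le_one (μ := μ) (s := K))
  have h1q0 : (0:ℝ) ≤ 1 - q := by linarith
  have hμK : μ K = ENNReal.ofReal q := (ENNReal.ofReal_toReal hKtop).symm
  have hμKc : μ Kᶜ = ENNReal.ofReal (1 - q) := by
    rw [prob_compl_eq_one_sub hK, hμK, ← ENNReal.ofReal_one, ← ENNReal.ofReal_sub _ hq0]
  -- decomposition
  have hA : {ω | ∃ i, 1 ≤ i ∧ i ≤ Q ω ∧ U i ω ∈ K}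
      = ⋃ k : ℕ, (Q ⁻¹' {k + 1} ∩ V ⁻¹' S (k + 1)) := by
    ext ω
    simp only [Set.mem_setOf_eq, Set.mem_iUnion, Set.mem_inter_iff, Set.mem_preimage,
      Set.mem_singleton_iff, hSdef, Finset.mem_coe, Finset.mem_Icc, hVdef]
    constructor
    · rintro ⟨i, h1, h2, h3⟩
      refine ⟨Q ω - 1, by omega, ?_⟩
      exact ⟨i, ⟨h1, by omega⟩, h3⟩
    · rintro ⟨k, hk, i, ⟨hi1, hi2⟩, hiK⟩
      exact ⟨i, hi1, by omega, hiK⟩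
  -- law of U i on complement
  have hμc : ∀ i : ℕ, P ((U i) ⁻¹' Kᶜ) = μ Kᶜ := fun i => by
    rw [← hUlaw i, Measure.map_apply (hUmeas i) hK.compl]
  -- probability of S n
  have hPS : ∀ n : ℕ, P (V ⁻¹' S n) = 1 - ENNReal.ofReal (1 - q) ^ n := by
    intro n
    have hcompl : V ⁻¹' S n = (⋂ i ∈ Finset.Icc 1 n, (U i) ⁻¹' Kᶜ)ᶜ := by
      ext ω
      simp [hSdef, hVdef]
    have hinterMeas : MeasurableSet (⋂ i ∈ Finset.Icc 1 n, (U i) ⁻¹' Kᶜ) :=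
      MeasurableSet.biInter (Finset.countable_toSet _) (fun i _ => (hUmeas i) hK.compl)
    have hiid := iIndepFun_iff_measure_inter_preimage_eq_mul.mp hUiid (Finset.Icc 1 n)
      (sets := fun _ => Kᶜ) (fun i _ => hK.compl)
    have hinter : P (⋂ i ∈ Finset.Icc 1 n, (U i) ⁻¹' Kᶜ) = ENNReal.ofReal (1 - q) ^ n := by
      rw [hiid, Finset.prod_congr rfl (fun i _ => by rw [hμc i, hμKc]), Finset.prod_const,
        Nat.card_Icc]
      simp
    rw [hcompl, prob_compl_eq_one_sub hinterMeas, hinter]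
  -- measurability and disjointness
  have hmeasInter : ∀ k : ℕ, MeasurableSet (Q ⁻¹' {k + 1} ∩ V ⁻¹' S (k + 1)) := fun k =>
    (hQmeas (measurableSet_singleton _)).inter (hVmeas (hSmeas _))
  have hdisj : Pairwise (Function.onFun Disjoint
      (fun k : ℕ => Q ⁻¹' {k + 1} ∩ V ⁻¹' S (k + 1))) := by
    intro k l hkl
    refine Set.disjoint_left.mpr ?_
    rintro ω ⟨hk, -⟩ ⟨hl, -⟩
    have h1 : Q ω = k + 1 := hk
    have h2 : Q ω = l + 1 := hl
    exact hkl (by omega)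
  -- term values
  have hterm : ∀ k : ℕ, P (Q ⁻¹' {k + 1} ∩ V ⁻¹' S (k + 1))
      = ENNReal.ofReal (sibuya β (k + 1) * (1 - (1 - q) ^ (k + 1))) := by
    intro k
    rw [hindep.measure_inter_preimage_eq_mul {k + 1} (S (k + 1))
      (measurableSet_singleton _) (hSmeas _)]
    have hQk : P (Q ⁻¹' {k + 1}) = ENNReal.ofReal (sibuya β (k + 1)) := by
      rw [show Q ⁻¹' {k + 1} = {ω | Q ω = k + 1} from rfl]
      exact hQlaw (k + 1) (Nat.succ_le_succ (Nat.zero_le k))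
    have hSk : P (V ⁻¹' S (k + 1)) = ENNReal.ofReal (1 - (1 - q) ^ (k + 1)) := by
      rw [hPS (k + 1), ENNReal.ofReal_sub 1 (pow_nonneg h1q0 _), ENNReal.ofReal_one,
        ENNReal.ofReal_pow h1q0]
    rw [hQk, hSk, ← ENNReal.ofReal_mul (sibuya_succ_nonneg β hβ0 hβ1 k)]
  -- put it together
  have hhs := hasSum_sibuya_hit β hβ0 hβ1 hq0 hq1
  have hnn : ∀ k : ℕ, 0 ≤ sibuya β (k + 1) * (1 - (1 - q) ^ (k + 1)) := fun k =>
    mul_nonneg (sibuya_succ_nonneg β hβ0 hβ1 k)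
      (by nlinarith [pow_le_one₀ h1q0 (by linarith : 1 - q ≤ 1) (n := k + 1)])
  calc P {ω | ∃ i, 1 ≤ i ∧ i ≤ Q ω ∧ U i ω ∈ K}
      = ∑' k : ℕ, P (Q ⁻¹' {k + 1} ∩ V ⁻¹' S (k + 1)) := by
        rw [hA, measure_iUnion hdisj hmeasInter]
    _ = ∑' k : ℕ, ENNReal.ofReal (sibuya β (k + 1) * (1 - (1 - q) ^ (k + 1))) :=
        tsum_congr hterm
    _ = ENNReal.ofReal (∑' k : ℕ, sibuya β (k + 1) * (1 - (1 - q) ^ (k + 1))) :=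
        (ENNReal.ofReal_tsum_of_nonneg hnn hhs.summable).symm
    _ = ENNReal.ofReal (q ^ β) := by rw [hhs.tsum_eq]
    _ = μ K ^ β := by rw [hμK, ENNReal.ofReal_rpow_of_nonneg hq0 hβ0.le]
end

section
/- Let α, α' > 0 and β ∈ (0,1) with α < α'β. Let (Z_i)_{i≥1} be i.i.d. nonnegative random variables whose tail F̄_Z(x) = P(Z_1 > x) is regularly varying with index −α', and let Q_β be a Sibuya random variable with parameter β, independent of (Z_i). Then E[(max_{i=1,…,Q_β} Z_i)^α] < ∞. -/
open MeasureTheory ProbabilityTheory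
open scoped NNReal ENNReal

open Filter

/-- A measurable function `L : (0,∞) → (0,∞)` is slowly varying at infinity if
`L(tx)/L(x) → 1` as `x → ∞` for every `t > 0`. -/
def SlowlyVarying (L : ℝ → ℝ) : Prop :=
  Measurable L ∧ (∀ x > 0, 0 < L x) ∧
    ∀ t > 0, Filter.Tendsto (fun x => L (t * x) / L x) Filter.atTop (nhds 1)

/-- A function `g` is regularly varying with index `ρ` if `g(x) = x^ρ L(x)` for some
slowly varying `L`. -/
def RegularlyVarying (g : ℝ → ℝ) (ρ : ℝ) : Prop :=
  ∃ L : ℝ → ℝ, SlowlyVarying L ∧ ∀ x > 0, g x = x ^ ρ * L x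

lemma aux_log_le (m : ℕ) : Real.log ((m : ℝ) + 1) ≤ ∑ j ∈ Finset.range m, (1:ℝ)/((j:ℝ)+1) := by
  induction m with
  | zero => simp
  | succ m ih =>
    rw [Finset.sum_range_succ]
    have h1 : Real.log (((m:ℝ)+2)/((m:ℝ)+1)) ≤ ((m:ℝ)+2)/((m:ℝ)+1) - 1 :=
      Real.log_le_sub_one_of_pos (by positivity)
    have h2 : Real.log (((m:ℝ)+2)/((m:ℝ)+1)) = Real.log ((m:ℝ)+2) - Real.log ((m:ℝ)+1) :=
      Real.log_div (by positivity) (by positivity)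
    have h3 : ((m:ℝ)+2)/((m:ℝ)+1) - 1 = 1/((m:ℝ)+1) := by
      field_simp
      norm_num
    have key : Real.log ((m:ℝ)+2) ≤ Real.log ((m:ℝ)+1) + 1/((m:ℝ)+1) := by
      rw [h3] at h1; linarith
    push_cast
    rw [show ((m:ℝ)+1+1) = (m:ℝ)+2 by ring]
    linarith [ih]

lemma aux_prod_le {β : ℝ} (hβ0 : 0 < β) (hβ1 : β < 1) (m : ℕ) :
    ∏ j ∈ Finset.range m, (1 - β/((j:ℝ)+1)) ≤ ((m:ℝ)+1) ^ (-β) := by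
  have hnn : ∀ j ∈ Finset.range m, 0 ≤ 1 - β/((j:ℝ)+1) := by
    intro j _
    have h1 : β/((j:ℝ)+1) ≤ β := by
      apply div_le_self hβ0.le
      have : (0:ℝ) ≤ (j:ℝ) := Nat.cast_nonneg j
      linarith
    linarith
  calc ∏ j ∈ Finset.range m, (1 - β/((j:ℝ)+1))
      ≤ ∏ j ∈ Finset.range m, Real.exp (-(β/((j:ℝ)+1))) := by
        apply Finset.prod_le_prod hnn
        intro j _
        have := Real.add_one_le_exp (-(β/((j:ℝ)+1)))
        linarith
    _ = Real.exp (∑ j ∈ Finset.range m, -(β/((j:ℝ)+1))) := (Real.exp_sum _ _).symm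
    _ ≤ Real.exp (Real.log ((m:ℝ)+1) * (-β)) := by
        apply Real.exp_le_exp.2
        have hsum : ∑ j ∈ Finset.range m, -(β/((j:ℝ)+1))
            = -β * ∑ j ∈ Finset.range m, (1:ℝ)/((j:ℝ)+1) := by
          rw [Finset.mul_sum]; apply Finset.sum_congr rfl; intro j _; ring
        rw [hsum]
        have := aux_log_le m
        nlinarith [this, hβ0]
    _ = ((m:ℝ)+1) ^ (-β) := (Real.rpow_def_of_pos (by positivity) _).symm

lemma aux_gamma_ratio {β : ℝ} (hβ0 : 0 < β) (hβ1 : β < 1) :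
    ∀ k : ℕ, 1 ≤ k →
      Real.Gamma ((k:ℝ) - β) / (Real.Gamma (1-β) * Real.Gamma (k:ℝ))
        = ∏ j ∈ Finset.range (k-1), (1 - β/((j:ℝ)+1)) := by
  intro k hk
  induction k, hk using Nat.le_induction with
  | base =>
    simp only [Nat.cast_one, Real.Gamma_one, mul_one, Finset.range_zero, Finset.prod_empty]
    exact div_self (Real.Gamma_pos_of_pos (by linarith)).ne'
  | succ n hn ih =>
    have hn1 : (1:ℝ) ≤ (n:ℝ) := by exact_mod_cast hn
    have hn0 : (0:ℝ) < (n:ℝ) := by linarith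
    have hnβ : (0:ℝ) < (n:ℝ) - β := by linarith
    have e1 : ((n+1:ℕ):ℝ) - β = ((n:ℝ) - β) + 1 := by push_cast; ring
    have e2 : ((n+1:ℕ):ℝ) = (n:ℝ) + 1 := by push_cast; ring
    have hG1 : Real.Gamma (((n:ℝ)-β)+1) = ((n:ℝ)-β) * Real.Gamma ((n:ℝ)-β) :=
      Real.Gamma_add_one hnβ.ne'
    have hG2 : Real.Gamma ((n:ℝ)+1) = (n:ℝ) * Real.Gamma (n:ℝ) :=
      Real.Gamma_add_one hn0.ne'
    have hrange : (n+1) - 1 = (n-1) + 1 := by omega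
    have hcast : ((n-1:ℕ):ℝ) + 1 = (n:ℝ) := by
      have : ((n-1:ℕ):ℝ) = (n:ℝ) - 1 := by
        rw [Nat.cast_sub hn]; norm_num
      rw [this]; ring
    rw [e1, e2, hG1, hG2, hrange, Finset.prod_range_succ, ← ih, hcast]
    have hA : Real.Gamma ((n:ℝ)-β) > 0 := Real.Gamma_pos_of_pos hnβ
    have hB : Real.Gamma (1-β) > 0 := Real.Gamma_pos_of_pos (by linarith)
    have hC : Real.Gamma (n:ℝ) > 0 := Real.Gamma_pos_of_pos hn0
    field_simp

lemma aux_sibuya_nonneg {β : ℝ} (hβ0 : 0 < β) (hβ1 : β < 1) {k : ℕ} (hk : 1 ≤ k) :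
    0 ≤ sibuya β k := by
  have h1 : (0:ℝ) < (k:ℝ) - β := by
    have : (1:ℝ) ≤ (k:ℝ) := by exact_mod_cast hk
    linarith
  unfold sibuya
  apply div_nonneg
  · exact mul_nonneg hβ0.le (Real.Gamma_pos_of_pos h1).le
  · exact mul_nonneg (Real.Gamma_pos_of_pos (by linarith)).le
      (Real.Gamma_pos_of_pos (by positivity)).le

lemma aux_sibuya_le {β : ℝ} (hβ0 : 0 < β) (hβ1 : β < 1) {k : ℕ} (hk : 1 ≤ k) :
    sibuya β k ≤ β * (k:ℝ) ^ (-(1+β)) := by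
  have hk0 : (0:ℝ) < (k:ℝ) := by exact_mod_cast hk
  have hG2 : Real.Gamma ((k:ℝ)+1) = (k:ℝ) * Real.Gamma (k:ℝ) :=
    Real.Gamma_add_one hk0.ne'
  have hratio := aux_gamma_ratio hβ0 hβ1 k hk
  have hprod := aux_prod_le hβ0 hβ1 (k-1)
  have hcast : ((k-1:ℕ):ℝ) + 1 = (k:ℝ) := by
    have : ((k-1:ℕ):ℝ) = (k:ℝ) - 1 := by rw [Nat.cast_sub hk]; norm_num
    rw [this]; ring
  rw [hcast] at hprod
  have key : Real.Gamma ((k:ℝ) - β) / (Real.Gamma (1-β) * Real.Gamma (k:ℝ)) ≤ (k:ℝ)^(-β) := by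
    rw [hratio]; exact hprod
  have hexp : (k:ℝ) ^ (-(1+β)) = (k:ℝ)⁻¹ * (k:ℝ)^(-β) := by
    rw [show -(1+β) = (-1) + (-β) by ring, Real.rpow_add hk0, Real.rpow_neg_one]
  have hsib : sibuya β k = (β / (k:ℝ)) * (Real.Gamma ((k:ℝ) - β) / (Real.Gamma (1-β) * Real.Gamma (k:ℝ))) := by
    unfold sibuya
    rw [hG2]
    field_simp
  rw [hsib, hexp]
  have h2 : (β / (k:ℝ)) * (Real.Gamma ((k:ℝ) - β) / (Real.Gamma (1-β) * Real.Gamma (k:ℝ)))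
      ≤ (β / (k:ℝ)) * (k:ℝ)^(-β) := by
    apply mul_le_mul_of_nonneg_left key (by positivity)
  calc (β / (k:ℝ)) * (Real.Gamma ((k:ℝ) - β) / (Real.Gamma (1-β) * Real.Gamma (k:ℝ)))
      ≤ (β / (k:ℝ)) * (k:ℝ)^(-β) := h2
    _ = β * ((k:ℝ)⁻¹ * (k:ℝ)^(-β)) := by ring

lemma aux_poly_tail {v : ℝ → ℝ} {γ : ℝ} (hγ : 0 < γ)
    (hmono : ∀ x y : ℝ, 0 < x → x ≤ y → v y ≤ v x)
    (hpos : ∀ x : ℝ, 0 < x → 0 < v x)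
    (hstep : ∃ x₁ : ℝ, ∀ x : ℝ, x₁ ≤ x → v (2*x) ≤ (2:ℝ)^(-γ) * v x) :
    ∃ x₀ C : ℝ, 1 ≤ x₀ ∧ 0 < C ∧ ∀ x : ℝ, x₀ ≤ x → v x ≤ C * x ^ (-γ) := by
  obtain ⟨x₁, hx₁⟩ := hstep
  set x₀ : ℝ := max x₁ 1 with hx₀def
  have hx₀1 : (1:ℝ) ≤ x₀ := le_max_right _ _
  have hx₀pos : (0:ℝ) < x₀ := lt_of_lt_of_le one_pos hx₀1
  have key : ∀ n : ℕ, v ((2:ℝ)^n * x₀) ≤ ((2:ℝ)^n)^(-γ) * v x₀ := by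
    intro n
    induction n with
    | zero => simp [Real.one_rpow]
    | succ n ih =>
      have h2n : (1:ℝ) ≤ (2:ℝ)^n := one_le_pow₀ (by norm_num)
      have hge : x₁ ≤ (2:ℝ)^n * x₀ := by
        calc x₁ ≤ x₀ := le_max_left _ _
          _ = 1 * x₀ := (one_mul _).symm
          _ ≤ (2:ℝ)^n * x₀ := by apply mul_le_mul_of_nonneg_right h2n hx₀pos.le
      have e : (2:ℝ)^(n+1) * x₀ = 2 * ((2:ℝ)^n * x₀) := by ring
      calc v ((2:ℝ)^(n+1) * x₀) = v (2 * ((2:ℝ)^n * x₀)) := by rw [e]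
        _ ≤ (2:ℝ)^(-γ) * v ((2:ℝ)^n * x₀) := hx₁ _ hge
        _ ≤ (2:ℝ)^(-γ) * (((2:ℝ)^n)^(-γ) * v x₀) := by
            apply mul_le_mul_of_nonneg_left ih (Real.rpow_nonneg (by norm_num) _)
        _ = ((2:ℝ)^(n+1))^(-γ) * v x₀ := by
            rw [show ((2:ℝ)^(n+1) : ℝ) = 2 * (2:ℝ)^n by ring,
              Real.mul_rpow (by norm_num) (by positivity)]
            ring
  refine ⟨x₀, (2:ℝ)^γ * x₀^γ * v x₀, hx₀1, ?_, ?_⟩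
  · exact mul_pos (mul_pos (Real.rpow_pos_of_pos two_pos _) (Real.rpow_pos_of_pos hx₀pos _))
      (hpos _ hx₀pos)
  · intro x hx
    have hx0 : (0:ℝ) < x := lt_of_lt_of_le hx₀pos hx
    have h1 : (1:ℝ) ≤ x / x₀ := (one_le_div hx₀pos).2 hx
    obtain ⟨n, hn1, hn2⟩ := exists_nat_pow_near h1 one_lt_two
    have ha : (2:ℝ)^n * x₀ ≤ x := by
      rw [← le_div_iff₀ hx₀pos]; exact hn1
    have hb : x < (2:ℝ)^(n+1) * x₀ := by
      rw [← div_lt_iff₀ hx₀pos]; exact hn2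
    have hpow_pos : (0:ℝ) < (2:ℝ)^n * x₀ := by positivity
    have hv1 : v x ≤ ((2:ℝ)^n)^(-γ) * v x₀ := le_trans (hmono _ _ hpow_pos ha) (key n)
    have hxγ : x ^ γ ≤ ((2:ℝ)^(n+1) * x₀) ^ γ := Real.rpow_le_rpow hx0.le hb.le hγ.le
    have hC : v x * x ^ γ ≤ (2:ℝ)^γ * x₀^γ * v x₀ := by
      have hmul := mul_le_mul hv1 hxγ (Real.rpow_nonneg hx0.le _)
        (mul_nonneg (Real.rpow_nonneg (by positivity) _) (hpos _ hx₀pos).le)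
      have heq : (((2:ℝ)^n)^(-γ) * v x₀) * (((2:ℝ)^(n+1) * x₀) ^ γ)
          = (2:ℝ)^γ * x₀^γ * v x₀ := by
        rw [Real.mul_rpow (by positivity) hx₀pos.le,
          show ((2:ℝ)^(n+1) : ℝ) = 2 * (2:ℝ)^n by ring,
          Real.mul_rpow (by norm_num) (by positivity)]
        have hcancel : ((2:ℝ)^n)^(-γ) * ((2:ℝ)^n)^γ = 1 := by
          rw [← Real.rpow_add (by positivity)]
          simp
        linear_combination (2:ℝ)^γ * x₀^γ * v x₀ * hcancel
      linarith [hmul, heq.le, heq.ge]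
    have hxneg : (0:ℝ) < x ^ (-γ) := Real.rpow_pos_of_pos hx0 _
    have hfin : v x * x ^ γ * x ^ (-γ) ≤ ((2:ℝ)^γ * x₀^γ * v x₀) * x ^ (-γ) :=
      mul_le_mul_of_nonneg_right hC hxneg.le
    have hone : x ^ γ * x ^ (-γ) = 1 := by
      rw [← Real.rpow_add hx0]; simp
    calc v x = v x * (x ^ γ * x ^ (-γ)) := by rw [hone, mul_one]
      _ = v x * x ^ γ * x ^ (-γ) := by ring
      _ ≤ ((2:ℝ)^γ * x₀^γ * v x₀) * x ^ (-γ) := hfin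

/-- Let `α, α' > 0` and `β ∈ (0,1)` with `α < α'β`.  Let `(Z_i)_{i≥1}` be i.i.d. nonnegative
random variables whose tail `F̄_Z` is regularly varying with index `−α'`, and let `Q_β` be a
Sibuya random variable with parameter `β`, independent of `(Z_i)`.  Then
`E[(max_{i=1,…,Q_β} Z_i)^α] < ∞`. -/
theorem sibuya_sampled_max_moment
    (α α' β : ℝ) (hα : 0 < α) (hα' : 0 < α') (hβ : β ∈ Set.Ioo (0:ℝ) 1)
    (hdom : α < α' * β)
    {Ω : Type*} [MeasurableSpace Ω] (P : Measure Ω) [IsProbabilityMeasure P]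
    (Z : ℕ → Ω → ℝ≥0) (hZmeas : ∀ i, Measurable (Z i))
    (hZiid : iIndepFun Z P)
    (hZlaw : ∀ i, Measure.map (Z i) P = Measure.map (Z 1) P)
    (hFZ : RegularlyVarying (fun x => (P {ω | x < (Z 1 ω : ℝ)}).toReal) (-α'))
    (Q : Ω → ℕ) (hQmeas : Measurable Q)
    (hQ0 : P {ω | Q ω = 0} = 0)
    (hQlaw : ∀ k : ℕ, 1 ≤ k → P {ω | Q ω = k} = ENNReal.ofReal (sibuya β k))
    (hindep : IndepFun Q (fun ω i => Z i ω) P) :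
    ∫⁻ ω, (((Finset.Icc 1 (Q ω)).sup (fun i => Z i ω) : ℝ≥0) : ℝ≥0∞) ^ α ∂P < ⊤ := by
  obtain ⟨hβ0, hβ1⟩ := hβ
  -- exponents
  set s : ℝ := (α/α' + β)/2 with hs_def
  have hαα' : α/α' < β := (div_lt_iff₀ hα').2 (by linarith [hdom])
  have hαα'0 : 0 < α/α' := div_pos hα hα'
  have hs_pos : 0 < s := by positivity
  have hs_ltβ : s < β := by rw [hs_def]; linarith
  have hs_lt1 : s < 1 := lt_trans hs_ltβ hβ1
  have hαs' : α < s * α' := by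
    have : α/α' < s := by rw [hs_def]; linarith
    calc α = (α/α') * α' := by field_simp
      _ < s * α' := by apply mul_lt_mul_of_pos_right this hα'
  have hαs : α/s < α' := (div_lt_iff₀ hs_pos).2 (by linarith)
  set γ : ℝ := (α/s + α')/2 with hγ_def
  have hγ_pos : 0 < γ := by positivity
  have hγ_ltα' : γ < α' := by rw [hγ_def]; linarith
  have hαγs : α < γ * s := by
    have h1 : α/s < γ := by rw [hγ_def]; linarith
    calc α = (α/s) * s := by field_simp
      _ < γ * s := by apply mul_lt_mul_of_pos_right h1 hs_pos
  -- tail functions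
  set u : ℝ → ℝ≥0∞ := fun x => P {ω | x < (Z 1 ω : ℝ)} with hu_def
  set v : ℝ → ℝ := fun x => (u x).toReal with hv_def
  have huv : ∀ x, u x = ENNReal.ofReal (v x) :=
    fun x => (ENNReal.ofReal_toReal (measure_ne_top P _)).symm
  have hv_nonneg : ∀ x, 0 ≤ v x := fun x => ENNReal.toReal_nonneg
  obtain ⟨L, ⟨hLmeas, hLpos, hLslow⟩, hrep⟩ := hFZ
  -- the max and its coercion
  set g : Ω → ℝ≥0 := fun ω => (Finset.Icc 1 (Q ω)).sup (fun i => Z i ω) with hg_def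
  set f : Ω → ℝ := fun ω => (g ω : ℝ) with hf_def
  have hf_nonneg : ∀ ω, 0 ≤ f ω := fun ω => (g ω).coe_nonneg
  -- measurability
  have hAmeas : ∀ k : ℕ, MeasurableSet {ω | Q ω = k} :=
    fun k => hQmeas (measurableSet_singleton k)
  have hYt : ∀ t : ℝ, MeasurableSet {y : ℝ≥0 | t < (y:ℝ)} :=
    fun t => measurable_coe_nnreal_real measurableSet_Ioi
  have hFk : ∀ st : Finset ℕ, Measurable fun ω => (st.sup fun i => Z i ω) := by
    intro st
    induction st using Finset.induction_on with
    | empty => simp only [Finset.sup_empty]; exact measurable_const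
    | insert _ _ ha ih =>
      simp only [Finset.sup_insert]
      exact Measurable.sup (hZmeas _) ih
  have hgmeas : Measurable g := by
    intro S hS
    have hpre : g ⁻¹' S = ⋃ k : ℕ, ({ω | Q ω = k} ∩
        (fun ω => ((Finset.Icc 1 k).sup fun i => Z i ω)) ⁻¹' S) := by
      ext ω
      simp only [Set.mem_preimage, Set.mem_iUnion, Set.mem_inter_iff, Set.mem_setOf_eq]
      constructor
      · intro h; exact ⟨Q ω, rfl, h⟩
      · rintro ⟨k, hk, h⟩
        show g ω ∈ S
        rw [hg_def]
        simp only [hk]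
        exact h
    rw [hpre]
    exact MeasurableSet.iUnion fun k => (hAmeas k).inter (hFk _ hS)
  have hfmeas : Measurable f := measurable_coe_nnreal_real.comp hgmeas
  -- identical tails
  have hZtail : ∀ (i : ℕ) (t : ℝ), P {ω | t < (Z i ω : ℝ)} = u t := by
    intro i t
    have h1 : {ω | t < (Z i ω : ℝ)} = Z i ⁻¹' {y : ℝ≥0 | t < (y:ℝ)} := rfl
    have h2 : u t = P (Z 1 ⁻¹' {y : ℝ≥0 | t < (y:ℝ)}) := rfl
    rw [h1, h2, ← Measure.map_apply (hZmeas i) (hYt t),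
      ← Measure.map_apply (hZmeas 1) (hYt t), hZlaw i]
  -- independence of events
  have hindep' : ∀ (k i : ℕ) (t : ℝ),
      P ({ω | Q ω = k} ∩ {ω | t < (Z i ω : ℝ)}) = P {ω | Q ω = k} * u t := by
    intro k i t
    have hE : MeasurableSet ((fun h : ℕ → ℝ≥0 => h i) ⁻¹' {y : ℝ≥0 | t < (y:ℝ)}) :=
      (measurable_pi_apply i) (hYt t)
    have h := hindep.measure_inter_preimage_eq_mul {k}
      ((fun h : ℕ → ℝ≥0 => h i) ⁻¹' {y : ℝ≥0 | t < (y:ℝ)})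
      (measurableSet_singleton k) hE
    have e1 : Q ⁻¹' {k} = {ω | Q ω = k} := rfl
    have e2 : (fun ω => fun i => Z i ω) ⁻¹' ((fun h : ℕ → ℝ≥0 => h i) ⁻¹' {y : ℝ≥0 | t < (y:ℝ)})
        = {ω | t < (Z i ω : ℝ)} := rfl
    rw [e1, e2] at h
    rw [h, hZtail i t]
  -- the constant
  set C₀ : ℝ≥0∞ := ∑' k : ℕ, P {ω | Q ω = k} * (k:ℝ≥0∞)^s with hC₀_def
  have hC₀_ne_top : C₀ ≠ ⊤ := by
    have hterm : ∀ k : ℕ, P {ω | Q ω = k} * (k:ℝ≥0∞)^s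
        ≤ ENNReal.ofReal (β * (k:ℝ)^(s-1-β)) := by
      intro k
      rcases Nat.eq_zero_or_pos k with hk | hk
      · subst hk
        rw [hQ0, zero_mul]
        exact zero_le
      · have hk0 : (0:ℝ) < (k:ℝ) := by exact_mod_cast hk
        rw [hQlaw k hk]
        have hcoe : ((k:ℝ≥0∞))^s = ENNReal.ofReal ((k:ℝ)^s) := by
          rw [← ENNReal.ofReal_natCast k,
            ← ENNReal.ofReal_rpow_of_nonneg (Nat.cast_nonneg k) hs_pos.le]
        rw [hcoe, ← ENNReal.ofReal_mul (aux_sibuya_nonneg hβ0 hβ1 hk)]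
        apply ENNReal.ofReal_le_ofReal
        have h1 : sibuya β k * (k:ℝ)^s ≤ (β * (k:ℝ)^(-(1+β))) * (k:ℝ)^s :=
          mul_le_mul_of_nonneg_right (aux_sibuya_le hβ0 hβ1 hk) (Real.rpow_nonneg hk0.le _)
        have h2 : (β * (k:ℝ)^(-(1+β))) * (k:ℝ)^s = β * (k:ℝ)^(s-1-β) := by
          rw [mul_assoc, ← Real.rpow_add hk0]
          ring_nf
        linarith
    have hsummable : Summable (fun k : ℕ => β * (k:ℝ)^(s-1-β)) :=
      (Real.summable_nat_rpow.2 (by linarith)).mul_left β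
    have hnn : ∀ k : ℕ, 0 ≤ β * (k:ℝ)^(s-1-β) :=
      fun k => mul_nonneg hβ0.le (Real.rpow_nonneg (Nat.cast_nonneg k) _)
    have : C₀ ≤ ∑' k : ℕ, ENNReal.ofReal (β * (k:ℝ)^(s-1-β)) :=
      ENNReal.tsum_le_tsum hterm
    rw [← ENNReal.ofReal_tsum_of_nonneg hnn hsummable] at this
    exact ne_top_of_le_ne_top ENNReal.ofReal_ne_top this
  -- key tail estimate
  have key : ∀ t : ℝ, 0 < t → P {a | t < f a} ≤ C₀ * (u t)^s := by
    intro t ht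
    have hsplit : P {a | t < f a} ≤ ∑' k : ℕ, P ({ω | Q ω = k} ∩ {a | t < f a}) := by
      have hsub : {a | t < f a} ⊆ ⋃ k : ℕ, ({ω | Q ω = k} ∩ {a | t < f a}) :=
        fun a ha => Set.mem_iUnion.2 ⟨Q a, rfl, ha⟩
      exact (measure_mono hsub).trans (measure_iUnion_le _)
    have hterm : ∀ k : ℕ, P ({ω | Q ω = k} ∩ {a | t < f a})
        ≤ P {ω | Q ω = k} * ((k:ℝ≥0∞) * u t)^s := by
      intro k
      rcases Nat.eq_zero_or_pos k with hk | hk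
      · subst hk
        calc P ({ω | Q ω = 0} ∩ {a | t < f a}) ≤ P {ω | Q ω = 0} :=
              measure_mono Set.inter_subset_left
          _ = 0 := hQ0
          _ ≤ _ := zero_le
      · have hsub : {ω | Q ω = k} ∩ {a | t < f a}
            ⊆ ⋃ i ∈ Finset.Icc 1 k, ({ω | Q ω = k} ∩ {ω | t < (Z i ω : ℝ)}) := by
          rintro ω ⟨hQk, hft⟩
          have hne : (Finset.Icc 1 k).Nonempty := ⟨1, Finset.mem_Icc.2 ⟨le_refl 1, hk⟩⟩
          obtain ⟨i, hi, hieq⟩ := Finset.exists_mem_eq_sup (Finset.Icc 1 k) hne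
            (fun i => Z i ω)
          have hQk' : Q ω = k := hQk
          have hfω : f ω = (Z i ω : ℝ) := by
            show ((g ω : ℝ≥0) : ℝ) = (Z i ω : ℝ)
            have hgZ : g ω = Z i ω := by
              show (Finset.Icc 1 (Q ω)).sup (fun j => Z j ω) = Z i ω
              rw [hQk']
              exact hieq
            rw [hgZ]
          refine Set.mem_biUnion hi ⟨hQk, ?_⟩
          show t < (Z i ω : ℝ)
          rw [← hfω]
          exact hft
        have hle1 : P ({ω | Q ω = k} ∩ {a | t < f a})
            ≤ (k:ℝ≥0∞) * (P {ω | Q ω = k} * u t) := by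
          calc P ({ω | Q ω = k} ∩ {a | t < f a})
              ≤ P (⋃ i ∈ Finset.Icc 1 k, ({ω | Q ω = k} ∩ {ω | t < (Z i ω : ℝ)})) :=
                measure_mono hsub
            _ ≤ ∑ i ∈ Finset.Icc 1 k, P ({ω | Q ω = k} ∩ {ω | t < (Z i ω : ℝ)}) :=
                measure_biUnion_finset_le _ _
            _ = ∑ i ∈ Finset.Icc 1 k, P {ω | Q ω = k} * u t := by
                apply Finset.sum_congr rfl
                intro i _
                exact hindep' k i t
            _ = (k:ℝ≥0∞) * (P {ω | Q ω = k} * u t) := by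
                rw [Finset.sum_const, Nat.card_Icc]
                simp [nsmul_eq_mul]
        have hle2 : P ({ω | Q ω = k} ∩ {a | t < f a}) ≤ P {ω | Q ω = k} :=
          measure_mono Set.inter_subset_left
        by_cases hcase : (k:ℝ≥0∞) * u t ≤ 1
        · calc P ({ω | Q ω = k} ∩ {a | t < f a})
              ≤ (k:ℝ≥0∞) * (P {ω | Q ω = k} * u t) := hle1
            _ = P {ω | Q ω = k} * ((k:ℝ≥0∞) * u t) := by ring
            _ ≤ P {ω | Q ω = k} * ((k:ℝ≥0∞) * u t)^s := by
                apply mul_le_mul_right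
                calc (k:ℝ≥0∞) * u t = ((k:ℝ≥0∞) * u t)^(1:ℝ) := (ENNReal.rpow_one _).symm
                  _ ≤ ((k:ℝ≥0∞) * u t)^s :=
                    ENNReal.rpow_le_rpow_of_exponent_ge hcase hs_lt1.le
        · push_neg at hcase
          calc P ({ω | Q ω = k} ∩ {a | t < f a}) ≤ P {ω | Q ω = k} := hle2
            _ = P {ω | Q ω = k} * 1 := (mul_one _).symm
            _ ≤ P {ω | Q ω = k} * ((k:ℝ≥0∞) * u t)^s :=
                mul_le_mul_right (ENNReal.one_le_rpow hcase.le hs_pos) _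
    calc P {a | t < f a} ≤ ∑' k : ℕ, P ({ω | Q ω = k} ∩ {a | t < f a}) := hsplit
      _ ≤ ∑' k : ℕ, P {ω | Q ω = k} * ((k:ℝ≥0∞) * u t)^s := ENNReal.tsum_le_tsum hterm
      _ = ∑' k : ℕ, (P {ω | Q ω = k} * (k:ℝ≥0∞)^s) * (u t)^s := by
          apply tsum_congr
          intro k
          rw [ENNReal.mul_rpow_of_nonneg _ _ hs_pos.le, mul_assoc]
      _ = C₀ * (u t)^s := ENNReal.tsum_mul_right
  -- polynomial tail bound on v
  have hpoly : ∃ x₀ C : ℝ, 1 ≤ x₀ ∧ 0 < C ∧ ∀ x : ℝ, x₀ ≤ x → v x ≤ C * x ^ (-γ) := by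
    have hvpos : ∀ x : ℝ, 0 < x → 0 < v x := by
      intro x hx
      rw [hrep x hx]
      exact mul_pos (Real.rpow_pos_of_pos hx _) (hLpos x hx)
    have hvmono : ∀ x y : ℝ, 0 < x → x ≤ y → v y ≤ v x := by
      intro x y _ hxy
      apply ENNReal.toReal_mono (measure_ne_top P _)
      apply measure_mono
      intro ω hω
      exact lt_of_le_of_lt hxy hω
    have hratio : Tendsto (fun x => v (2*x) / v x) atTop (nhds ((2:ℝ)^(-α'))) := by
      have h2 := hLslow 2 two_pos
      have heq : (fun x => (2:ℝ)^(-α') * (L (2*x) / L x)) =ᶠ[atTop]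
          (fun x => v (2*x) / v x) := by
        filter_upwards [eventually_gt_atTop (0:ℝ)] with x hx
        rw [hrep x hx, hrep (2*x) (by linarith)]
        rw [Real.mul_rpow (by norm_num) hx.le]
        have hx' : x^(-α') ≠ 0 := (Real.rpow_pos_of_pos hx _).ne'
        have hL' : L x ≠ 0 := (hLpos x hx).ne'
        field_simp
      have hlim : Tendsto (fun x => (2:ℝ)^(-α') * (L (2*x) / L x)) atTop
          (nhds ((2:ℝ)^(-α'))) := by
        have hh := (tendsto_const_nhds (x := (2:ℝ)^(-α'))).mul h2
        simpa using hh
      exact hlim.congr' heq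
    have hlt : (2:ℝ)^(-α') < (2:ℝ)^(-γ) :=
      (Real.rpow_lt_rpow_left_iff one_lt_two).2 (by linarith)
    have hev : ∀ᶠ x in atTop, v (2*x) / v x < (2:ℝ)^(-γ) ∧ (0:ℝ) < x :=
      (hratio.eventually_lt_const hlt).and (eventually_gt_atTop 0)
    obtain ⟨x₁, hx₁⟩ := eventually_atTop.1 hev
    apply aux_poly_tail hγ_pos hvmono hvpos
    refine ⟨x₁, fun x hx => ?_⟩
    obtain ⟨h1, h2⟩ := hx₁ x hx
    have := (div_lt_iff₀ (hvpos x h2)).1 h1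
    linarith
  obtain ⟨x₀, C₁, hx₀1, hC₁pos, hbound⟩ := hpoly
  -- layer cake
  have hLHS : ∫⁻ ω, ((g ω : ℝ≥0∞))^α ∂P = ∫⁻ t in Set.Ioi (0:ℝ), P {a | t < f a ^ α} := by
    have h1 : ∀ ω, ((g ω : ℝ≥0∞))^α = ENNReal.ofReal (f ω ^ α) := by
      intro ω
      rw [← ENNReal.ofReal_rpow_of_nonneg (hf_nonneg ω) hα.le]
      congr 1
      exact ENNReal.ofReal_coe_nnreal.symm
    calc ∫⁻ ω, ((g ω : ℝ≥0∞))^α ∂P = ∫⁻ ω, ENNReal.ofReal (f ω ^ α) ∂P :=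
        lintegral_congr h1
      _ = ∫⁻ t in Set.Ioi (0:ℝ), P {a | t < f a ^ α} :=
        lintegral_eq_lintegral_meas_lt P
          (Filter.Eventually.of_forall fun ω => Real.rpow_nonneg (hf_nonneg ω) α)
          ((hfmeas.pow measurable_const).aemeasurable)
  show (∫⁻ ω, ((g ω : ℝ≥0∞))^α ∂P) < ⊤
  rw [hLHS]
  set T : ℝ := x₀ ^ α with hT_def
  have hT1 : (1:ℝ) ≤ T := Real.one_le_rpow hx₀1 hα.le
  have hT0 : (0:ℝ) < T := lt_of_lt_of_le one_pos hT1
  rw [← Set.Ioc_union_Ioi_eq_Ioi hT0.le,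
    lintegral_union measurableSet_Ioi Set.Ioc_disjoint_Ioi_same]
  apply ENNReal.add_lt_top.2
  constructor
  · calc ∫⁻ t in Set.Ioc (0:ℝ) T, P {a | t < f a ^ α}
        ≤ ∫⁻ _t in Set.Ioc (0:ℝ) T, 1 := lintegral_mono fun t => prob_le_one
      _ = ENNReal.ofReal T := by
          rw [lintegral_one, Measure.restrict_apply_univ, Real.volume_Ioc]
          norm_num
      _ < ⊤ := ENNReal.ofReal_lt_top
  · set e : ℝ := α⁻¹ * (-(γ * s)) with he_def
    have he : e < -1 := by
      have h1 : 1 < α⁻¹ * (γ * s) := by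
        rw [inv_mul_eq_div]
        exact (one_lt_div hα).2 hαγs
      have h2 : e = -(α⁻¹ * (γ * s)) := by rw [he_def]; ring
      rw [h2]
      linarith
    set K : ℝ≥0∞ := C₀ * ENNReal.ofReal (C₁ ^ s) with hK_def
    have hK_ne_top : K ≠ ⊤ := ENNReal.mul_ne_top hC₀_ne_top ENNReal.ofReal_ne_top
    have hptwise : ∀ t ∈ Set.Ioi T, P {a | t < f a ^ α} ≤ K * ENNReal.ofReal (t ^ e) := by
      intro t ht
      have ht' : T < t := ht
      have ht0 : (0:ℝ) < t := lt_trans hT0 ht'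
      have hr0 : (0:ℝ) < t ^ (α⁻¹ : ℝ) := Real.rpow_pos_of_pos ht0 _
      have hrx₀ : x₀ ≤ t ^ (α⁻¹ : ℝ) := by
        have hTx : x₀ = T ^ (α⁻¹ : ℝ) :=
          (Real.rpow_rpow_inv (le_trans zero_le_one hx₀1) hα.ne').symm
        rw [hTx]
        exact Real.rpow_le_rpow hT0.le ht'.le (inv_nonneg.2 hα.le)
      have hset : {a | t < f a ^ α} = {a | t ^ (α⁻¹:ℝ) < f a} := by
        ext a
        simp only [Set.mem_setOf_eq]
        exact (Real.rpow_inv_lt_iff_of_pos ht0.le (hf_nonneg a) hα).symm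
      rw [hset]
      have hb2 : (u (t ^ (α⁻¹:ℝ)))^s = ENNReal.ofReal (v (t ^ (α⁻¹:ℝ)) ^ s) := by
        rw [huv, ENNReal.ofReal_rpow_of_nonneg (hv_nonneg _) hs_pos.le]
      have hb3 : v (t ^ (α⁻¹:ℝ)) ^ s ≤ C₁ ^ s * t ^ e := by
        have h4 : v (t ^ (α⁻¹:ℝ)) ^ s ≤ (C₁ * (t ^ (α⁻¹:ℝ)) ^ (-γ)) ^ s :=
          Real.rpow_le_rpow (hv_nonneg _) (hbound _ hrx₀) hs_pos.le
        have h5 : (C₁ * (t ^ (α⁻¹:ℝ)) ^ (-γ)) ^ s = C₁ ^ s * t ^ e := by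
          rw [Real.mul_rpow hC₁pos.le (Real.rpow_nonneg hr0.le _),
            ← Real.rpow_mul (Real.rpow_nonneg ht0.le _), ← Real.rpow_mul ht0.le]
          rw [he_def]
          ring_nf
        linarith
      calc P {a | t^(α⁻¹:ℝ) < f a} ≤ C₀ * (u (t ^ (α⁻¹:ℝ)))^s := key _ hr0
        _ = C₀ * ENNReal.ofReal (v (t ^ (α⁻¹:ℝ)) ^ s) := by rw [hb2]
        _ ≤ C₀ * ENNReal.ofReal (C₁^s * t^e) :=
            mul_le_mul_right (ENNReal.ofReal_le_ofReal hb3) _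
        _ = K * ENNReal.ofReal (t^e) := by
            rw [hK_def, ENNReal.ofReal_mul (Real.rpow_nonneg hC₁pos.le _), mul_assoc]
    have hint : IntegrableOn (fun t : ℝ => t ^ e) (Set.Ioi T) :=
      integrableOn_Ioi_rpow_of_lt he hT0
    have hfin : ∫⁻ t in Set.Ioi T, ENNReal.ofReal (t ^ e) < ⊤ :=
      Integrable.lintegral_lt_top hint
    calc ∫⁻ t in Set.Ioi T, P {a | t < f a ^ α}
        ≤ ∫⁻ t in Set.Ioi T, K * ENNReal.ofReal (t ^ e) := by
          apply lintegral_mono_ae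
          rw [ae_restrict_iff' measurableSet_Ioi]
          exact Filter.Eventually.of_forall hptwise
      _ = K * ∫⁻ t in Set.Ioi T, ENNReal.ofReal (t ^ e) :=
          lintegral_const_mul' K _ hK_ne_top
      _ < ⊤ := ENNReal.mul_lt_top hK_ne_top.lt_top hfin
end

section
/- Let α > 0, β, γ ∈ (0,1), d ∈ ℕ, and a_1, …, a_d > 0. Let (M_1, …, M_d) be a random vector with joint distribution function P(M_i ≤ x_i for all i) = exp(−(Σ_{i=1}^d a_i x_i^{−α/β})^β) for x_1, …, x_d > 0, and let S_γ be a nonnegative random variable with Laplace transform E[e^{−λ S_γ}] = e^{−λ^γ} for all λ ≥ 0, independent of (M_1, …, M_d). Then for all x_1, …, x_d > 0, P(S_γ^{1/α} M_i ≤ x_i for all i) = exp(−(Σ_{i=1}^d a_i x_i^{−(αγ)/(βγ)})^{βγ}) = exp(−(Σ_{i=1}^d a_i x_i^{−α/β})^{βγ}); that is, S_γ^{1/α} times a logistic (α,β) vector has the logistic (αγ, βγ) law with the same scales a_i. -/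
open MeasureTheory ProbabilityTheory

/-- Stability of the logistic family under independent stable scaling: if `(M_1,…,M_d)`
has the multivariate logistic extreme-value distribution with parameters `(α,β)` and
scales `a_i`, and `S_γ` is an independent positive `γ`-stable random variable (Laplace
transform `e^{−λ^γ}`), then `(S_γ^{1/α} M_1, …, S_γ^{1/α} M_d)` has the logistic
`(αγ, βγ)` law with the same scales, i.e.
`P(S_γ^{1/α} M_i ≤ x_i, i ≤ d) = exp(−(Σ_i a_i x_i^{−α/β})^{βγ})`
(noting `(αγ)/(βγ) = α/β`). -/
theorem logistic_stable_scaling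
    (α β γ : ℝ) (hα : 0 < α) (hβ : β ∈ Set.Ioo (0:ℝ) 1) (hγ : γ ∈ Set.Ioo (0:ℝ) 1)
    (d : ℕ) (hd : 0 < d) (a : Fin d → ℝ) (ha : ∀ i, 0 < a i)
    {Ω : Type*} [MeasurableSpace Ω] (P : Measure Ω) [IsProbabilityMeasure P]
    (M : Fin d → Ω → ℝ) (hMmeas : ∀ i, Measurable (M i))
    (hMlaw : ∀ x : Fin d → ℝ, (∀ i, 0 < x i) →
      P {ω | ∀ i, M i ω ≤ x i}
        = ENNReal.ofReal (Real.exp (-((∑ i, a i * x i ^ (-(α / β))) ^ β))))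
    (S : Ω → ℝ) (hSmeas : Measurable S) (hSnonneg : ∀ ω, 0 ≤ S ω)
    (hSlaplace : ∀ l : ℝ, 0 ≤ l →
      ∫ ω, Real.exp (-(l * S ω)) ∂P = Real.exp (-(l ^ γ)))
    (hindep : IndepFun S (fun ω i => M i ω) P)
    (x : Fin d → ℝ) (hx : ∀ i, 0 < x i) :
    P {ω | ∀ i, S ω ^ (1 / α) * M i ω ≤ x i}
      = ENNReal.ofReal (Real.exp (-((∑ i, a i * x i ^ (-((α * γ) / (β * γ)))) ^ (β * γ))))
      ∧
    P {ω | ∀ i, S ω ^ (1 / α) * M i ω ≤ x i}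
      = ENNReal.ofReal (Real.exp (-((∑ i, a i * x i ^ (-(α / β))) ^ (β * γ)))) := by
  obtain ⟨hβ0, hβ1⟩ := hβ
  obtain ⟨hγ0, hγ1⟩ := hγ
  set c : ℝ := ∑ i, a i * x i ^ (-(α / β)) with hc
  have hcpos : 0 < c :=
    Finset.sum_pos (fun i _ => mul_pos (ha i) (Real.rpow_pos_of_pos (hx i) _))
      (Finset.univ_nonempty_iff.mpr ⟨⟨0, hd⟩⟩)
  have hcb : 0 ≤ c ^ β := Real.rpow_nonneg hcpos.le β
  set Mv : Ω → (Fin d → ℝ) := fun ω i => M i ω with hMv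
  have hMvmeas : Measurable Mv := measurable_pi_lambda _ hMmeas
  -- the target set in product space
  set t : Set (ℝ × (Fin d → ℝ)) := {p | ∀ i, p.1 ^ (1 / α) * p.2 i ≤ x i} with htdef
  have ht : MeasurableSet t := by
    rw [htdef, Set.setOf_forall]
    refine MeasurableSet.iInter fun i => measurableSet_le ?_ measurable_const
    fun_prop
  have hjoint : P.map (fun ω => (S ω, Mv ω)) = (P.map S).prod (P.map Mv) :=
    (indepFun_iff_map_prod_eq_prod_map_map hSmeas.aemeasurable hMvmeas.aemeasurable).mp hindep
  have hPeq : P {ω | ∀ i, S ω ^ (1 / α) * M i ω ≤ x i}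
      = ((P.map S).prod (P.map Mv)) t := by
    rw [← hjoint, Measure.map_apply (hSmeas.prodMk hMvmeas) ht]
    rfl
  -- slice computation
  have hMvprob : IsProbabilityMeasure (P.map Mv) := Measure.isProbabilityMeasure_map hMvmeas.aemeasurable
  have hslice : ∀ s : ℝ, 0 ≤ s →
      (P.map Mv) (Prod.mk s ⁻¹' t) = ENNReal.ofReal (Real.exp (-(c ^ β * s))) := by
    intro s hs
    rcases eq_or_lt_of_le hs with h0 | hpos
    · have : Prod.mk s ⁻¹' t = Set.univ := by
        ext m
        simp only [Set.mem_preimage, htdef, Set.mem_setOf_eq, Set.mem_univ, iff_true]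
        intro i
        rw [← h0, Real.zero_rpow (by positivity : (1:ℝ)/α ≠ 0), zero_mul]
        exact (hx i).le
      rw [this, ← h0]
      simp [Real.exp_zero]
    · have hsp : 0 < s ^ ((1:ℝ) / α) := Real.rpow_pos_of_pos hpos _
      have hx' : ∀ i, 0 < x i / s ^ ((1:ℝ) / α) := fun i => div_pos (hx i) hsp
      have hset : Prod.mk s ⁻¹' t = {m : Fin d → ℝ | ∀ i, m i ≤ x i / s ^ ((1:ℝ)/α)} := by
        ext m
        simp only [Set.mem_preimage, htdef, Set.mem_setOf_eq]
        exact forall_congr' fun i => (le_div_iff₀' hsp).symm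
      have hmeas : MeasurableSet {m : Fin d → ℝ | ∀ i, m i ≤ x i / s ^ ((1:ℝ)/α)} := by
        rw [Set.setOf_forall]
        exact MeasurableSet.iInter fun i =>
          measurableSet_le (measurable_pi_apply i) measurable_const
      rw [hset, Measure.map_apply hMvmeas hmeas]
      have := hMlaw (fun i => x i / s ^ ((1:ℝ)/α)) hx'
      rw [show (Mv ⁻¹' {m | ∀ i, m i ≤ x i / s ^ ((1:ℝ)/α)})
          = {ω | ∀ i, M i ω ≤ (fun i => x i / s ^ ((1:ℝ)/α)) i} from rfl, this]
      congr 2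
      have hterm : ∀ i, (x i / s ^ ((1:ℝ)/α)) ^ (-(α/β))
          = x i ^ (-(α/β)) * s ^ ((1:ℝ)/β) := by
        intro i
        rw [Real.div_rpow (hx i).le hsp.le, ← Real.rpow_mul hpos.le,
          div_eq_mul_inv, ← Real.rpow_neg hpos.le]
        congr 1
        field_simp
      have hsum : (∑ i, a i * (x i / s ^ ((1:ℝ)/α)) ^ (-(α/β))) = c * s ^ ((1:ℝ)/β) := by
        rw [hc, Finset.sum_mul]
        exact Finset.sum_congr rfl fun i _ => by rw [hterm i, mul_assoc]
      rw [hsum, Real.mul_rpow hcpos.le (Real.rpow_nonneg hpos.le _),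
        ← Real.rpow_mul hpos.le, one_div_mul_cancel hβ0.ne', Real.rpow_one]
  -- a.e. nonnegativity of the mapped measure
  have haes : ∀ᵐ s ∂(P.map S), 0 ≤ s :=
    (ae_map_iff hSmeas.aemeasurable measurableSet_Ici).mpr (ae_of_all _ hSnonneg)
  -- key computation
  have key : P {ω | ∀ i, S ω ^ (1 / α) * M i ω ≤ x i}
      = ENNReal.ofReal (Real.exp (-((c ^ β) ^ γ))) := by
    rw [hPeq, Measure.prod_apply ht]
    have h1 : ∫⁻ s, (P.map Mv) (Prod.mk s ⁻¹' t) ∂(P.map S)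
        = ∫⁻ s, ENNReal.ofReal (Real.exp (-(c ^ β * s))) ∂(P.map S) := by
      refine lintegral_congr_ae ?_
      filter_upwards [haes] with s hs using hslice s hs
    rw [h1, lintegral_map (by fun_prop) hSmeas]
    have hint : Integrable (fun ω => Real.exp (-(c ^ β * S ω))) P := by
      refine Integrable.mono' (integrable_const 1)
        ((hSmeas.const_mul (c ^ β)).neg.exp).aestronglyMeasurable
        (ae_of_all _ fun ω => ?_)
      rw [Real.norm_eq_abs, abs_of_pos (Real.exp_pos _)]
      exact Real.exp_le_one_iff.mpr (neg_nonpos.mpr (mul_nonneg hcb (hSnonneg ω)))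
    rw [← ofReal_integral_eq_lintegral_ofReal hint
      (ae_of_all _ fun ω => (Real.exp_pos _).le), hSlaplace (c ^ β) hcb]
  have hpow : (c ^ β) ^ γ = c ^ (β * γ) := (Real.rpow_mul hcpos.le β γ).symm
  have hsumeq : (∑ i, a i * x i ^ (-((α * γ) / (β * γ)))) = c := by
    rw [hc]
    refine Finset.sum_congr rfl fun i _ => ?_
    rw [mul_div_mul_right α β hγ0.ne']
  constructor
  · rw [key, hpow, hsumeq]
  · rw [key, hpow]
end

section
/- Let N_1, …, N_m be independent random variables with values in ℕ_0 = {0,1,2,…}, and for k ∈ ℕ_0 set J_k := Σ_{ℓ=1}^m 𝟙{N_ℓ = k}. Then (a) for all k ≠ k', E[J_k J_{k'}] ≤ E[J_k] E[J_{k'}]; (b) Var(J_k) ≤ E[J_k] for every k; and consequently (c) for every function c : ℕ_0 → [0,∞) one has Var(Σ_{k≥0} c(k) J_k) ≤ Σ_{k≥0} c(k)^2 E[J_k]. -/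
open MeasureTheory ProbabilityTheory
open scoped ENNReal NNReal

/-- Negative correlation of the occupancy counts: if `N_1,…,N_m` are independent
`ℕ`-valued random variables and `J_k = Σ_ℓ 𝟙{N_ℓ = k}`, then (a) `E[J_k J_{k'}] ≤
E[J_k] E[J_{k'}]` for `k ≠ k'`, (b) `Var(J_k) ≤ E[J_k]`, and (c) for every
`c : ℕ → [0,∞)`, `Var(Σ_k c(k) J_k) ≤ Σ_k c(k)² E[J_k]` (in `[0,∞]`). -/
theorem occupancy_counts_negative_correlation
    {Ω : Type*} [MeasurableSpace Ω] (P : Measure Ω) [IsProbabilityMeasure P]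
    (m : ℕ) (N : Fin m → Ω → ℕ) (hNmeas : ∀ ℓ, Measurable (N ℓ))
    (hNindep : iIndepFun N P)
    (J : ℕ → Ω → ℝ)
    (hJ : ∀ k ω, J k ω = ∑ ℓ : Fin m, if N ℓ ω = k then (1:ℝ) else 0) :
    (∀ k k' : ℕ, k ≠ k' →
      (∫ ω, J k ω * J k' ω ∂P) ≤ (∫ ω, J k ω ∂P) * (∫ ω, J k' ω ∂P)) ∧
    (∀ k : ℕ, variance (J k) P ≤ ∫ ω, J k ω ∂P) ∧
    (∀ c : ℕ → ℝ, (∀ k, 0 ≤ c k) →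
      evariance (fun ω => ∑' k : ℕ, c k * J k ω) P
        ≤ ∑' k : ℕ, ENNReal.ofReal ((c k) ^ 2) * ∫⁻ ω, ENNReal.ofReal (J k ω) ∂P) := by
  classical
  -- the basic events
  set A : Fin m → ℕ → Set Ω := fun ℓ k => N ℓ ⁻¹' {k} with hA
  have hAmeas : ∀ ℓ k, MeasurableSet (A ℓ k) :=
    fun ℓ k => hNmeas ℓ (measurableSet_singleton k)
  -- indicators as set indicators
  have hint : ∀ (s : Set Ω), MeasurableSet s →
      Integrable (fun ω => s.indicator (fun _ => (1:ℝ)) ω) P := by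
    intro s hs; exact (integrable_const (1:ℝ)).indicator hs
  have hEint : ∀ (s : Set Ω), MeasurableSet s →
      (∫ ω, s.indicator (fun _ => (1:ℝ)) ω ∂P) = (P s).toReal := by
    intro s hs
    simpa [measureReal_def] using integral_indicator_const (1:ℝ) hs
  have hiteA : ∀ ℓ k (ω : Ω), (if N ℓ ω = k then (1:ℝ) else 0)
      = (A ℓ k).indicator (fun _ => (1:ℝ)) ω := by
    intro ℓ k ω
    by_cases h : N ℓ ω = k <;>
      simp [h, hA, Set.indicator_apply, Set.mem_preimage]
  -- expectation of J k
  have hEJ : ∀ k, (∫ ω, J k ω ∂P) = ∑ ℓ : Fin m, (P (A ℓ k)).toReal := by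
    intro k
    have : (∫ ω, J k ω ∂P)
        = ∑ ℓ : Fin m, ∫ ω, (A ℓ k).indicator (fun _ => (1:ℝ)) ω ∂P := by
      rw [← integral_finset_sum _ (fun ℓ _ => hint _ (hAmeas ℓ k))]
      congr 1; funext ω; rw [hJ]
      exact Finset.sum_congr rfl fun ℓ _ => hiteA ℓ k ω
    rw [this]
    exact Finset.sum_congr rfl fun ℓ _ => hEint _ (hAmeas ℓ k)
  -- expectation of the product
  have hprod : ∀ k k', (∫ ω, J k ω * J k' ω ∂P)
      = ∑ ℓ : Fin m, ∑ ℓ' : Fin m, (P (A ℓ k ∩ A ℓ' k')).toReal := by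
    intro k k'
    have heq : ∀ ω, J k ω * J k' ω
        = ∑ ℓ : Fin m, ∑ ℓ' : Fin m,
            (A ℓ k ∩ A ℓ' k').indicator (fun _ => (1:ℝ)) ω := by
      intro ω
      rw [hJ, hJ, Finset.sum_mul_sum]
      refine Finset.sum_congr rfl fun ℓ _ => Finset.sum_congr rfl fun ℓ' _ => ?_
      by_cases h1 : N ℓ ω = k <;> by_cases h2 : N ℓ' ω = k' <;>
        simp [h1, h2, hA, Set.indicator_apply, Set.mem_preimage]
    calc (∫ ω, J k ω * J k' ω ∂P)
        = ∫ ω, ∑ ℓ : Fin m, ∑ ℓ' : Fin m,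
            (A ℓ k ∩ A ℓ' k').indicator (fun _ => (1:ℝ)) ω ∂P := by
          congr 1; funext ω; exact heq ω
      _ = ∑ ℓ : Fin m, ∫ ω, ∑ ℓ' : Fin m,
            (A ℓ k ∩ A ℓ' k').indicator (fun _ => (1:ℝ)) ω ∂P :=
          integral_finset_sum _ (fun ℓ _ =>
            integrable_finset_sum _ (fun ℓ' _ => hint _ ((hAmeas ℓ k).inter (hAmeas ℓ' k'))))
      _ = ∑ ℓ : Fin m, ∑ ℓ' : Fin m, (P (A ℓ k ∩ A ℓ' k')).toReal := by
          refine Finset.sum_congr rfl fun ℓ _ => ?_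
          rw [integral_finset_sum _ (fun ℓ' _ => hint _ ((hAmeas ℓ k).inter (hAmeas ℓ' k')))]
          exact Finset.sum_congr rfl fun ℓ' _ =>
            hEint _ ((hAmeas ℓ k).inter (hAmeas ℓ' k'))
  -- independence of distinct coordinates on the events
  have hPmul : ∀ ℓ ℓ' : Fin m, ℓ ≠ ℓ' → ∀ k k',
      P (A ℓ k ∩ A ℓ' k') = P (A ℓ k) * P (A ℓ' k') := by
    intro ℓ ℓ' hne k k'
    exact (hNindep.indepFun hne).measure_inter_preimage_eq_mul _ _
      (measurableSet_singleton k) (measurableSet_singleton k')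
  -- (a)
  have parta : ∀ k k' : ℕ, k ≠ k' →
      (∫ ω, J k ω * J k' ω ∂P) ≤ (∫ ω, J k ω ∂P) * (∫ ω, J k' ω ∂P) := by
    intro k k' hkk'
    rw [hprod, hEJ, hEJ, Finset.sum_mul_sum]
    refine Finset.sum_le_sum fun ℓ _ => Finset.sum_le_sum fun ℓ' _ => ?_
    by_cases hne : ℓ = ℓ'
    · subst hne
      have : A ℓ k ∩ A ℓ k' = ∅ := by
        ext ω; simp only [Set.mem_inter_iff, Set.mem_empty_iff_false, iff_false]
        rintro ⟨h1, h2⟩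
        have e1 : N ℓ ω = k := Set.mem_singleton_iff.mp (Set.mem_preimage.mp h1)
        have e2 : N ℓ ω = k' := Set.mem_singleton_iff.mp (Set.mem_preimage.mp h2)
        exact hkk' (e1.symm.trans e2)
      rw [this]
      simp only [measure_empty, ENNReal.toReal_zero]
      positivity
    · rw [hPmul ℓ ℓ' hne, ENNReal.toReal_mul]
  -- (b)
  have hJmeas : ∀ k, Measurable (J k) := by
    intro k
    have : J k = fun ω => ∑ ℓ : Fin m, if N ℓ ω = k then (1:ℝ) else 0 := by
      funext ω; exact hJ k ω
    rw [this]
    exact Finset.measurable_sum _ fun ℓ _ =>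
      Measurable.ite (hNmeas ℓ (measurableSet_singleton k)) measurable_const measurable_const
  have hJmem : ∀ k, MemLp (J k) 2 P := by
    intro k
    refine MemLp.of_bound (hJmeas k).aestronglyMeasurable (m : ℝ)
      (Filter.Eventually.of_forall fun ω => ?_)
    rw [hJ]
    calc ‖∑ ℓ : Fin m, if N ℓ ω = k then (1:ℝ) else 0‖
        ≤ ∑ ℓ : Fin m, ‖if N ℓ ω = k then (1:ℝ) else 0‖ := norm_sum_le _ _
      _ ≤ ∑ ℓ : Fin m, 1 := Finset.sum_le_sum fun ℓ _ => by
          by_cases h : N ℓ ω = k <;> simp [h]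
      _ = m := by simp
  have partb : ∀ k : ℕ, variance (J k) P ≤ ∫ ω, J k ω ∂P := by
    intro k
    rw [variance_eq_sub (hJmem k)]
    have hsq : P[(J k) ^ 2] = ∑ ℓ : Fin m, ∑ ℓ' : Fin m, (P (A ℓ k ∩ A ℓ' k)).toReal := by
      rw [← hprod k k]
      congr 1; funext ω; simp [pow_two]
    rw [hsq, hEJ, pow_two, Finset.sum_mul_sum, ← Finset.sum_sub_distrib]
    have hterm : ∀ ℓ : Fin m,
        (∑ ℓ' : Fin m, (P (A ℓ k ∩ A ℓ' k)).toReal)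
          - (∑ ℓ' : Fin m, (P (A ℓ k)).toReal * (P (A ℓ' k)).toReal)
        ≤ (P (A ℓ k)).toReal := by
      intro ℓ
      rw [← Finset.sum_sub_distrib]
      have : ∑ ℓ' : Fin m, ((P (A ℓ k ∩ A ℓ' k)).toReal
            - (P (A ℓ k)).toReal * (P (A ℓ' k)).toReal)
          = (P (A ℓ k ∩ A ℓ k)).toReal - (P (A ℓ k)).toReal * (P (A ℓ k)).toReal := by
        refine Finset.sum_eq_single ℓ (fun ℓ' _ hne => ?_) (by simp)
        rw [hPmul ℓ ℓ' (Ne.symm hne), ENNReal.toReal_mul, sub_self]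
      rw [this, Set.inter_self]
      have h1 : (P (A ℓ k)).toReal * (P (A ℓ k)).toReal ≥ 0 := by positivity
      linarith
    exact Finset.sum_le_sum fun ℓ _ => hterm ℓ
  refine ⟨parta, partb, ?_⟩
  -- (c)
  intro c hc
  set X : Fin m → Ω → ℝ := fun ℓ ω => c (N ℓ ω) with hX
  have hcmeas : Measurable c := measurable_from_top
  have hXmeas : ∀ ℓ, Measurable (X ℓ) := fun ℓ => hcmeas.comp (hNmeas ℓ)
  -- the random variable is the finite sum of the X ℓ
  have hYeq : (fun ω => ∑' k : ℕ, c k * J k ω) = fun ω => ∑ ℓ : Fin m, X ℓ ω := by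
    funext ω
    have h1 : ∀ k, c k * J k ω
        = ∑ ℓ : Fin m, (if N ℓ ω = k then c k else 0) := by
      intro k
      rw [hJ, Finset.mul_sum]
      exact Finset.sum_congr rfl fun ℓ _ => by by_cases h : N ℓ ω = k <;> simp [h]
    simp_rw [h1]
    rw [Summable.tsum_finsetSum (fun ℓ _ => summable_of_ne_finset_zero (s := {N ℓ ω})
      (fun k hk => by simp at hk; simp [Ne.symm hk]))]
    refine Finset.sum_congr rfl fun ℓ _ => ?_
    exact (hasSum_single (f := fun k => if N ℓ ω = k then c k else 0) (N ℓ ω)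
      (fun k hk => by simp [Ne.symm hk])).tsum_eq.trans (by simp [hX])
  -- lintegral of J k
  have hlinJ : ∀ k, (∫⁻ ω, ENNReal.ofReal (J k ω) ∂P) = ∑ ℓ : Fin m, P (A ℓ k) := by
    intro k
    have h1 : ∀ ω, ENNReal.ofReal (J k ω)
        = ∑ ℓ : Fin m, (A ℓ k).indicator (fun _ => (1:ℝ≥0∞)) ω := by
      intro ω
      rw [hJ, ENNReal.ofReal_sum_of_nonneg (fun ℓ _ => by positivity)]
      refine Finset.sum_congr rfl fun ℓ _ => ?_
      by_cases h : N ℓ ω = k <;> simp [h, Set.indicator_apply, hA, Set.mem_preimage]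
    simp_rw [h1]
    rw [lintegral_finset_sum _ (fun ℓ _ => measurable_const.indicator (hAmeas ℓ k))]
    exact Finset.sum_congr rfl fun ℓ _ => lintegral_indicator_one (hAmeas ℓ k)
  -- second moment of X ℓ as a lintegral and as a series
  have hSM : ∀ ℓ, (∫⁻ ω, ENNReal.ofReal ((X ℓ ω) ^ 2) ∂P)
      = ∑' k : ℕ, ENNReal.ofReal ((c k) ^ 2) * P (A ℓ k) := by
    intro ℓ
    have hg : Measurable (fun n : ℕ => ENNReal.ofReal ((c n) ^ 2)) := measurable_from_top
    calc (∫⁻ ω, ENNReal.ofReal ((X ℓ ω) ^ 2) ∂P)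
        = ∫⁻ n, ENNReal.ofReal ((c n) ^ 2) ∂(P.map (N ℓ)) := by
          rw [lintegral_map hg (hNmeas ℓ)]
      _ = ∑' n : ℕ, ENNReal.ofReal ((c n) ^ 2) * (P.map (N ℓ)) {n} :=
          lintegral_countable' _
      _ = ∑' k : ℕ, ENNReal.ofReal ((c k) ^ 2) * P (A ℓ k) := by
          refine tsum_congr fun k => ?_
          rw [Measure.map_apply (hNmeas ℓ) (measurableSet_singleton k)]
  -- RHS as a finite sum of second moments
  have hRHS : (∑' k : ℕ, ENNReal.ofReal ((c k) ^ 2) * ∫⁻ ω, ENNReal.ofReal (J k ω) ∂P)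
      = ∑ ℓ : Fin m, ∫⁻ ω, ENNReal.ofReal ((X ℓ ω) ^ 2) ∂P := by
    simp_rw [hlinJ, Finset.mul_sum, hSM]
    exact Summable.tsum_finsetSum fun ℓ _ => ENNReal.summable
  rw [hRHS, hYeq]
  by_cases hfin : ∀ ℓ : Fin m, (∫⁻ ω, ENNReal.ofReal ((X ℓ ω) ^ 2) ∂P) < ⊤
  · -- each X ℓ is in L²
    have hXmem : ∀ ℓ, MemLp (X ℓ) 2 P := by
      intro ℓ
      rw [memLp_two_iff_integrable_sq (hXmeas ℓ).aestronglyMeasurable]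
      refine ⟨((hXmeas ℓ).pow_const 2).aestronglyMeasurable, ?_⟩
      rw [hasFiniteIntegral_iff_ofReal (Filter.Eventually.of_forall fun ω => sq_nonneg _)]
      exact hfin ℓ
    have hXsqint : ∀ ℓ, Integrable (fun ω => (X ℓ ω) ^ 2) P := by
      intro ℓ
      refine ⟨((hXmeas ℓ).pow_const 2).aestronglyMeasurable, ?_⟩
      rw [hasFiniteIntegral_iff_ofReal (Filter.Eventually.of_forall fun ω => sq_nonneg _)]
      exact hfin ℓ
    have hsumfun : (∑ ℓ : Fin m, X ℓ) = fun ω => ∑ ℓ : Fin m, X ℓ ω := by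
      funext ω; simp
    have hsum_mem : MemLp (fun ω => ∑ ℓ : Fin m, X ℓ ω) 2 P := by
      have := memLp_finset_sum' (μ := P) (p := 2) Finset.univ (f := X)
        (fun ℓ _ => hXmem ℓ)
      rwa [hsumfun] at this
    rw [← ofReal_variance hsum_mem]
    have hvar : variance (fun ω => ∑ ℓ : Fin m, X ℓ ω) P
        = ∑ ℓ : Fin m, variance (X ℓ) P := by
      have hpair : Set.Pairwise ↑(Finset.univ : Finset (Fin m))
          (fun ℓ ℓ' => IndepFun (X ℓ) (X ℓ') P) := by
        intro ℓ _ ℓ' _ hne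
        exact (hNindep.indepFun hne).comp hcmeas hcmeas
      have := IndepFun.variance_sum (μ := P) (X := X)
        (s := Finset.univ) (fun ℓ _ => hXmem ℓ) hpair
      rwa [hsumfun] at this
    rw [hvar]
    calc ENNReal.ofReal (∑ ℓ : Fin m, variance (X ℓ) P)
        ≤ ENNReal.ofReal (∑ ℓ : Fin m, ∫ ω, (X ℓ ω) ^ 2 ∂P) := by
          refine ENNReal.ofReal_le_ofReal (Finset.sum_le_sum fun ℓ _ => ?_)
          have := variance_le_expectation_sq (μ := P) (hXmeas ℓ).aestronglyMeasurable
          simpa [pow_two] using this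
      _ = ∑ ℓ : Fin m, ENNReal.ofReal (∫ ω, (X ℓ ω) ^ 2 ∂P) :=
          ENNReal.ofReal_sum_of_nonneg fun ℓ _ =>
            integral_nonneg fun ω => sq_nonneg _
      _ = ∑ ℓ : Fin m, ∫⁻ ω, ENNReal.ofReal ((X ℓ ω) ^ 2) ∂P := by
          refine Finset.sum_congr rfl fun ℓ _ => ?_
          rw [ofReal_integral_eq_lintegral_ofReal (hXsqint ℓ)
            (Filter.Eventually.of_forall fun ω => sq_nonneg _)]
  · -- some second moment is infinite: the RHS is ⊤
    push_neg at hfin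
    obtain ⟨ℓ₀, hℓ₀⟩ := hfin
    have : (∑ ℓ : Fin m, ∫⁻ ω, ENNReal.ofReal ((X ℓ ω) ^ 2) ∂P) = ⊤ := by
      rw [eq_top_iff]
      calc (⊤ : ℝ≥0∞) = ∫⁻ ω, ENNReal.ofReal ((X ℓ₀ ω) ^ 2) ∂P := (top_le_iff.mp hℓ₀).symm
        _ ≤ _ := Finset.single_le_sum (f := fun ℓ => ∫⁻ ω, ENNReal.ofReal ((X ℓ ω) ^ 2) ∂P)
            (fun ℓ _ => zero_le) (Finset.mem_univ ℓ₀)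
    rw [this]
    exact le_top
end

section
/- Let α, α' > 0 and β ∈ (0,1) with α > α'β. Let {p_ℓ} be a non-increasing probability mass function on ℕ with ν(x) = #{k : 1/p_k ≤ x}, and let (ε_ℓ)_{ℓ≥1} be i.i.d. nonnegative random variables with common tail F̄_ε. Assume (i) F̄_ε is dominated at infinity by a function that is regularly varying with index −α (i.e. there exist C, x_0 with F̄_ε(x) ≤ C g(x) for all x ≥ x_0 and some g ∈ RV_{−α}), and (ii) ν is dominated at infinity by a function that is regularly varying with index β. Then for every ε ∈ [0, α/β − α'), the random series Σ_{ℓ≥1} p_ℓ ε_ℓ^{α'+ε} converges (is finite) almost surely. -/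
open MeasureTheory ProbabilityTheory
open scoped NNReal ENNReal

section Aux
open Filter
open scoped ENNReal

lemma aux_min_le_rpow {u s : ℝ} (hu : 0 ≤ u) (hs : 0 < s) (hs1 : s ≤ 1) :
    min u 1 ≤ u ^ s := by
  rcases eq_or_lt_of_le hu with h0 | h0
  · simp [← h0, Real.zero_rpow hs.ne']
  rcases le_total u 1 with h | h
  · have : u ^ (1:ℝ) ≤ u ^ s := Real.rpow_le_rpow_of_exponent_ge h0 h hs1
    simpa [Real.rpow_one, min_eq_left h] using this
  · have : (1:ℝ) ≤ u ^ s := Real.one_le_rpow h hs.le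
    simpa [min_eq_right h] using this

lemma aux_slowvary_geom (L : ℝ → ℝ) (hL : SlowlyVarying L) {t : ℝ} (ht : 1 < t)
    (x₀ : ℝ) : ∃ X : ℝ, 1 ≤ X ∧ x₀ ≤ X ∧ ∀ k : ℕ, L (t ^ k * X) ≤ 2 ^ k * L X := by
  obtain ⟨hmeas, hpos, hten⟩ := hL
  have h2 : ∀ᶠ x in atTop, L (t * x) / L x < 2 :=
    (hten t (by linarith)).eventually_lt_const (by norm_num)
  obtain ⟨X₁, hX₁⟩ := h2.exists_forall_of_atTop
  refine ⟨max 1 (max x₀ X₁), le_max_left _ _, le_trans (le_max_left _ _) (le_max_right _ _), ?_⟩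
  set X := max 1 (max x₀ X₁) with hX
  have hX1 : (1:ℝ) ≤ X := le_max_left _ _
  have hXX₁ : X₁ ≤ X := le_trans (le_max_right _ _) (le_max_right _ _)
  intro k
  induction k with
  | zero => simp
  | succ k ih =>
    have htk : (1:ℝ) ≤ t ^ k := one_le_pow₀ ht.le
    have hy : X ≤ t ^ k * X := le_mul_of_one_le_left (by linarith) htk
    have hypos : 0 < t ^ k * X := by nlinarith
    have hstep : L (t * (t ^ k * X)) / L (t ^ k * X) < 2 := hX₁ _ (le_trans hXX₁ hy)
    have hLy : 0 < L (t ^ k * X) := hpos _ hypos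
    have : L (t * (t ^ k * X)) ≤ 2 * L (t ^ k * X) := by
      rw [div_lt_iff₀ hLy] at hstep; linarith
    calc L (t ^ (k+1) * X) = L (t * (t ^ k * X)) := by ring_nf
      _ ≤ 2 * L (t ^ k * X) := this
      _ ≤ 2 * (2 ^ k * L X) := by linarith
      _ = 2 ^ (k+1) * L X := by ring

lemma aux_moment_finite {Ω : Type*} [MeasurableSpace Ω] (P : Measure Ω)
    [IsProbabilityMeasure P] (e : Ω → ℝ≥0) (he : Measurable e)
    (g : ℝ → ℝ) (α : ℝ) (hα : 0 < α) (hg : RegularlyVarying g (-α))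
    (C x₀ : ℝ) (hC : 0 < C)
    (htail : ∀ x ≥ x₀, (P {ω | x < (e ω : ℝ)}).toReal ≤ C * g x)
    (r : ℝ) (hr : 0 < r) (hrα : r < α) :
    ∫⁻ ω, ENNReal.ofReal ((e ω : ℝ) ^ r) ∂P ≠ ⊤ := by
  obtain ⟨L, hL, hgL⟩ := hg
  set t : ℝ := 4 ^ ((α - r)⁻¹) with htdef
  have hαr : 0 < α - r := by linarith
  have ht : 1 < t := by
    rw [htdef, Real.one_lt_rpow_iff_of_pos (by norm_num)]
    exact Or.inl ⟨by norm_num, by positivity⟩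
  have ht0 : 0 < t := lt_trans one_pos ht
  have htra : t ^ (r - α) = 1 / 4 := by
    rw [htdef, ← Real.rpow_mul (by norm_num : (0:ℝ) ≤ 4)]
    have : (α - r)⁻¹ * (r - α) = -1 := by
      field_simp
      ring
    rw [this, Real.rpow_neg_one]
    norm_num
  obtain ⟨X, hX1, hXx₀, hXgeom⟩ := aux_slowvary_geom L hL ht x₀
  have hX0 : (0:ℝ) < X := by linarith
  have hLX : 0 < L X := hL.2.1 X hX0
  -- grid points
  have hgrid_pos : ∀ k : ℕ, (0:ℝ) < t ^ k * X := fun k => by positivity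
  have hgrid_ge : ∀ k : ℕ, x₀ ≤ t ^ k * X := by
    intro k
    have : (1:ℝ) ≤ t ^ k := one_le_pow₀ ht.le
    nlinarith
  -- tail bound along grid
  have htail_grid : ∀ k : ℕ,
      (P {ω | t ^ k * X < (e ω : ℝ)}).toReal ≤ C * ((t ^ k * X) ^ (-α) * (2 ^ k * L X)) := by
    intro k
    have h1 := htail _ (hgrid_ge k)
    have h2 := hgL _ (hgrid_pos k)
    have h3 := hXgeom k
    have h4 : (0:ℝ) < (t ^ k * X) ^ (-α) := Real.rpow_pos_of_pos (hgrid_pos k) _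
    calc (P {ω | t ^ k * X < (e ω : ℝ)}).toReal ≤ C * g (t ^ k * X) := h1
      _ = C * ((t ^ k * X) ^ (-α) * L (t ^ k * X)) := by rw [h2]
      _ ≤ C * ((t ^ k * X) ^ (-α) * (2 ^ k * L X)) := by
          apply mul_le_mul_of_nonneg_left _ hC.le
          exact mul_le_mul_of_nonneg_left h3 h4.le
  -- the geometric coefficient sequence
  set B : ℕ → ℝ := fun k => (t ^ (k+2) * X) ^ r * (C * ((t ^ (k+1) * X) ^ (-α) * (2 ^ (k+1) * L X))) with hB
  have hBnonneg : ∀ k, 0 ≤ B k := by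
    intro k
    have h4 : (0:ℝ) ≤ (t ^ (k+1) * X) ^ (-α) := (Real.rpow_pos_of_pos (hgrid_pos (k+1)) _).le
    have h5 : (0:ℝ) ≤ (t ^ (k+2) * X) ^ r := (Real.rpow_pos_of_pos (hgrid_pos (k+2)) _).le
    have : (0:ℝ) < (2:ℝ) ^ (k+1) * L X := by positivity
    positivity
  have hBgeom : ∀ k, B k = (1/2) ^ k * B 0 := by
    intro k
    induction k with
    | zero => simp
    | succ k ih =>
      have step : B (k+1) = (1/2) * B k := by
        have e1 : (t ^ (k+3) * X : ℝ) = t * (t ^ (k+2) * X) := by ring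
        have e2 : (t ^ (k+2) * X : ℝ) = t * (t ^ (k+1) * X) := by ring
        have m1 : (t ^ (k+3) * X : ℝ) ^ r = t ^ r * (t ^ (k+2) * X) ^ r := by
          rw [e1, Real.mul_rpow ht0.le (hgrid_pos (k+2)).le]
        have m2 : (t ^ (k+2) * X : ℝ) ^ (-α) = t ^ (-α) * (t ^ (k+1) * X) ^ (-α) := by
          rw [e2, Real.mul_rpow ht0.le (hgrid_pos (k+1)).le]
        have m3 : (2:ℝ) ^ (k+2) = 2 * 2 ^ (k+1) := by ring
        have key : t ^ r * t ^ (-α) * 2 = 1/2 := by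
          rw [← Real.rpow_add ht0]
          have : r + -α = r - α := by ring
          rw [this, htra]; norm_num
        show (t ^ (k+1+2) * X) ^ r * (C * ((t ^ (k+1+1) * X) ^ (-α) * (2 ^ (k+1+1) * L X)))
            = (1/2) * B k
        have hk3 : k+1+2 = k+3 := by ring
        have hk2 : k+1+1 = k+2 := by ring
        rw [hk3, hk2, m1, m2, m3, hB]
        have : t ^ r * (t ^ (k + 2) * X) ^ r * (C * (t ^ (-α) * (t ^ (k + 1) * X) ^ (-α) * (2 * 2 ^ (k + 1) * L X)))
            = (t ^ r * t ^ (-α) * 2) * ((t ^ (k+2) * X) ^ r * (C * ((t ^ (k+1) * X) ^ (-α) * (2 ^ (k+1) * L X)))) := by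
          ring
        rw [this, key]
      rw [step, ih]; ring
  have hBsummable : Summable B := by
    apply Summable.congr (f := fun k => (1/2:ℝ) ^ k * B 0)
    · exact (summable_geometric_of_lt_one (by norm_num) (by norm_num)).mul_right _
    · intro k; exact (hBgeom k).symm
  -- the layering sets
  set S : ℕ → Set Ω := fun k => {ω | t ^ (k+1) * X < (e ω : ℝ)} with hS
  have hSmeas : ∀ k, MeasurableSet (S k) := by
    intro k
    exact measurableSet_lt measurable_const (measurable_coe_nnreal_real.comp he)
  -- pointwise layer-cake bound
  have hpoint : ∀ ω, ENNReal.ofReal ((e ω : ℝ) ^ r)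
      ≤ ENNReal.ofReal ((t * X) ^ r)
        + ∑' k : ℕ, (S k).indicator (fun _ => ENNReal.ofReal ((t ^ (k+2) * X) ^ r)) ω := by
    intro ω
    set u : ℝ := (e ω : ℝ) with hu
    have hu0 : 0 ≤ u := (e ω).coe_nonneg
    rcases le_or_gt u (t * X) with hcase | hcase
    · have : u ^ r ≤ (t * X) ^ r := Real.rpow_le_rpow hu0 hcase hr.le
      exact le_trans (ENNReal.ofReal_le_ofReal this) le_self_add
    · have hex : ∃ m : ℕ, u ≤ t ^ (m+1) * X := by
        obtain ⟨n, hn⟩ := pow_unbounded_of_one_lt (u / X) ht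
        refine ⟨n, ?_⟩
        have h1 : u < t ^ n * X := by
          rw [div_lt_iff₀ hX0] at hn; linarith
        have h2 : (t:ℝ) ^ n ≤ t ^ (n+1) := pow_le_pow_right₀ ht.le (Nat.le_succ n)
        nlinarith
      set m := Nat.find hex with hm
      have hspec : u ≤ t ^ (m+1) * X := Nat.find_spec hex
      have hmpos : m ≠ 0 := by
        intro h0
        rw [h0] at hspec
        simp at hspec
        linarith
      obtain ⟨j, hj⟩ := Nat.exists_eq_succ_of_ne_zero hmpos
      have hjlt : ¬ (u ≤ t ^ (j+1) * X) := by
        have := Nat.find_min hex (m := j) (by omega)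
        exact this
      have hmem : ω ∈ S j := by
        rw [hS]; simp only [Set.mem_setOf_eq]
        push_neg at hjlt
        exact hjlt
      have hval : (S j).indicator (fun _ => ENNReal.ofReal ((t ^ (j+2) * X) ^ r)) ω
          = ENNReal.ofReal ((t ^ (j+2) * X) ^ r) := Set.indicator_of_mem hmem _
      have hub : u ^ r ≤ (t ^ (j+2) * X) ^ r := by
        apply Real.rpow_le_rpow hu0 _ hr.le
        have : j + 2 = m + 1 := by omega
        rw [this]; exact hspec
      calc ENNReal.ofReal (u ^ r) ≤ ENNReal.ofReal ((t ^ (j+2) * X) ^ r) :=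
            ENNReal.ofReal_le_ofReal hub
        _ = (S j).indicator (fun _ => ENNReal.ofReal ((t ^ (j+2) * X) ^ r)) ω := hval.symm
        _ ≤ ∑' k : ℕ, (S k).indicator (fun _ => ENNReal.ofReal ((t ^ (k+2) * X) ^ r)) ω :=
            ENNReal.le_tsum j
        _ ≤ _ := le_add_self
  -- integrate
  have hmono := lintegral_mono (μ := P) hpoint
  have hrhs : (∫⁻ ω, (ENNReal.ofReal ((t * X) ^ r)
        + ∑' k : ℕ, (S k).indicator (fun _ => ENNReal.ofReal ((t ^ (k+2) * X) ^ r)) ω) ∂P)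
      = ENNReal.ofReal ((t * X) ^ r)
        + ∑' k : ℕ, ENNReal.ofReal ((t ^ (k+2) * X) ^ r) * P (S k) := by
    rw [lintegral_add_left measurable_const]
    rw [lintegral_const]
    simp only [measure_univ, mul_one]
    congr 1
    rw [lintegral_tsum (fun k => ((measurable_const.indicator (hSmeas k)).aemeasurable))]
    congr 1
    ext k
    rw [lintegral_indicator (hSmeas k), setLIntegral_const]
  -- bound the series by B
  have hterm : ∀ k : ℕ, ENNReal.ofReal ((t ^ (k+2) * X) ^ r) * P (S k) ≤ ENNReal.ofReal (B k) := by
    intro k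
    have hPfin : P (S k) ≠ ⊤ := measure_ne_top P _
    have : P (S k) ≤ ENNReal.ofReal (C * ((t ^ (k+1) * X) ^ (-α) * (2 ^ (k+1) * L X))) := by
      rw [← ENNReal.ofReal_toReal hPfin]
      exact ENNReal.ofReal_le_ofReal (htail_grid (k+1))
    calc ENNReal.ofReal ((t ^ (k+2) * X) ^ r) * P (S k)
        ≤ ENNReal.ofReal ((t ^ (k+2) * X) ^ r)
            * ENNReal.ofReal (C * ((t ^ (k+1) * X) ^ (-α) * (2 ^ (k+1) * L X))) :=
          mul_le_mul_right this _
      _ = ENNReal.ofReal (B k) := by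
          rw [← ENNReal.ofReal_mul (Real.rpow_pos_of_pos (hgrid_pos (k+2)) _).le]
  have hseries : (∑' k : ℕ, ENNReal.ofReal ((t ^ (k+2) * X) ^ r) * P (S k))
      ≤ ENNReal.ofReal (∑' k, B k) := by
    rw [ENNReal.ofReal_tsum_of_nonneg hBnonneg hBsummable]
    exact ENNReal.tsum_le_tsum hterm
  refine ne_top_of_le_ne_top ?_ (le_trans hmono (le_of_eq hrhs))
  exact ENNReal.add_ne_top.mpr ⟨ENNReal.ofReal_ne_top,
    (lt_of_le_of_lt hseries ENNReal.ofReal_lt_top).ne⟩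

lemma aux_p_summable (p : ℕ → ℝ) (hp_pos : ∀ k : ℕ, 0 < p (k + 1))
    (hp_mono : ∀ k : ℕ, p (k + 2) ≤ p (k + 1)) (hp_sum : (∑' k : ℕ, p (k + 1)) = 1)
    (β : ℝ) (hβ0 : 0 < β) (h : ℝ → ℝ) (hh : RegularlyVarying h β) (C x₀ : ℝ) (hC : 0 < C)
    (hνb : ∀ x ≥ x₀, (({k : ℕ | 1 / p (k + 1) ≤ x}).ncard : ℝ) ≤ C * h x)
    (s : ℝ) (hs : β < s) :
    Summable (fun k : ℕ => p (k + 1) ^ s) := by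
  have hs0 : 0 < s := lt_trans hβ0 hs
  -- basic facts about p
  have hp_summable : Summable (fun k : ℕ => p (k + 1)) := by
    by_contra hcon
    rw [tsum_eq_zero_of_not_summable hcon] at hp_sum
    norm_num at hp_sum
  have hp_anti : Antitone (fun k : ℕ => p (k + 1)) :=
    antitone_nat_of_succ_le (fun n => hp_mono n)
  have hp_le_one : ∀ k : ℕ, p (k + 1) ≤ 1 := by
    intro k
    rw [← hp_sum]
    exact Summable.le_tsum hp_summable k (fun j _ => (hp_pos j).le)
  have hp_to0 : Tendsto (fun k : ℕ => p (k + 1)) atTop (nhds 0) :=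
    hp_summable.tendsto_atTop_zero
  have hfin : ∀ x : ℝ, ({k : ℕ | 1 / p (k + 1) ≤ x}).Finite := by
    intro x
    rcases le_or_gt x 0 with hx | hx
    · have hempty : {k : ℕ | 1 / p (k + 1) ≤ x} = ∅ := by
        ext k; simp only [Set.mem_setOf_eq, Set.mem_empty_iff_false, iff_false, not_le]
        exact lt_of_le_of_lt hx (one_div_pos.mpr (hp_pos k))
      rw [hempty]; exact Set.finite_empty
    · have hev : ∀ᶠ k in atTop, p (k + 1) < 1 / x := by
        have := hp_to0.eventually_lt_const (by positivity : (0:ℝ) < 1 / x)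
        exact this
      obtain ⟨N, hN⟩ := hev.exists_forall_of_atTop
      apply Set.Finite.subset (Set.finite_Iio N)
      intro k hk
      simp only [Set.mem_setOf_eq] at hk
      by_contra hkN
      simp only [Set.mem_Iio, not_lt] at hkN
      have h1 := hN k hkN
      have h2 : 1 / (1 / x) < 1 / p (k + 1) := by
        apply one_div_lt_one_div_of_lt (hp_pos k) h1
      rw [one_div_one_div] at h2
      linarith
  have hν_mono : ∀ x y : ℝ, x ≤ y →
      (({k : ℕ | 1 / p (k + 1) ≤ x}).ncard : ℝ) ≤ (({k : ℕ | 1 / p (k + 1) ≤ y}).ncard : ℝ) := by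
    intro x y hxy
    exact_mod_cast Set.ncard_le_ncard (fun k hk => le_trans hk hxy) (hfin y)
  have hcount : ∀ k : ℕ, (k + 1 : ℝ) ≤ (({j : ℕ | 1 / p (j + 1) ≤ 1 / p (k + 1)}).ncard : ℝ) := by
    intro k
    have hsub : Set.Iic k ⊆ {j : ℕ | 1 / p (j + 1) ≤ 1 / p (k + 1)} := by
      intro j hj
      simp only [Set.mem_Iic] at hj
      simp only [Set.mem_setOf_eq]
      exact one_div_le_one_div_of_le (hp_pos k) (hp_anti hj)
    have h1 : (Set.Iic k).ncard ≤ ({j : ℕ | 1 / p (j + 1) ≤ 1 / p (k + 1)}).ncard :=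
      Set.ncard_le_ncard hsub (hfin _)
    have h2 : (Set.Iic k).ncard = k + 1 := by
      rw [← Nat.card_coe_set_eq, Nat.card_eq_fintype_card]
      simp [Nat.card_Iic]
    exact_mod_cast h2 ▸ h1
  -- slowly varying part of h
  obtain ⟨M, hM, hhM⟩ := hh
  set η : ℝ := (s - β) / 2 with hη
  have hη0 : 0 < η := by rw [hη]; linarith
  set τ : ℝ := 2 ^ (η⁻¹) with hτdef
  have hτ : 1 < τ := by
    rw [hτdef, Real.one_lt_rpow_iff_of_pos (by norm_num)]
    exact Or.inl ⟨by norm_num, by positivity⟩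
  have hτ0 : 0 < τ := lt_trans one_pos hτ
  have hτη : τ ^ η = 2 := by
    rw [hτdef, ← Real.rpow_mul (by norm_num : (0:ℝ) ≤ 2), inv_mul_cancel₀ hη0.ne', Real.rpow_one]
  obtain ⟨X, hX1, hXx₀, hXgeom⟩ := aux_slowvary_geom M hM hτ x₀
  have hX0 : (0:ℝ) < X := by linarith
  have hMX : 0 < M X := hM.2.1 X hX0
  set β' : ℝ := β + η with hβ'
  have hβ'0 : 0 < β' := by rw [hβ']; linarith
  have hβ's : β' < s := by rw [hβ', hη]; linarith
  have hτβ' : τ ^ β * 2 = τ ^ β' := by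
    rw [hβ', Real.rpow_add hτ0, hτη]
  -- grid bound on h
  have hgrid_pos : ∀ m : ℕ, (0:ℝ) < τ ^ m * X := fun m => by positivity
  have hgrid_ge : ∀ m : ℕ, x₀ ≤ τ ^ m * X := by
    intro m
    have : (1:ℝ) ≤ τ ^ m := one_le_pow₀ hτ.le
    nlinarith
  have hpow : ∀ m : ℕ, ((τ ^ m : ℝ)) ^ β = (τ ^ β) ^ m := by
    intro m
    rw [← Real.rpow_natCast τ m, ← Real.rpow_natCast (τ ^ β) m,
      ← Real.rpow_mul hτ0.le, ← Real.rpow_mul hτ0.le, mul_comm]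
  have hhgrid : ∀ m : ℕ, C * h (τ ^ m * X) ≤ C * X ^ β * M X * (τ ^ β') ^ m := by
    intro m
    have e1 : h (τ ^ m * X) = (τ ^ m * X) ^ β * M (τ ^ m * X) := hhM _ (hgrid_pos m)
    have e2 : M (τ ^ m * X) ≤ 2 ^ m * M X := hXgeom m
    have e3 : (0:ℝ) < (τ ^ m * X) ^ β := Real.rpow_pos_of_pos (hgrid_pos m) _
    have e4 : ((τ ^ m * X : ℝ)) ^ β = (τ ^ β) ^ m * X ^ β := by
      rw [Real.mul_rpow (by positivity) hX0.le, hpow]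
    calc C * h (τ ^ m * X) = C * ((τ ^ m * X) ^ β * M (τ ^ m * X)) := by rw [e1]
      _ ≤ C * ((τ ^ m * X) ^ β * (2 ^ m * M X)) := by
          apply mul_le_mul_of_nonneg_left _ hC.le
          exact mul_le_mul_of_nonneg_left e2 e3.le
      _ = C * X ^ β * M X * ((τ ^ β) ^ m * 2 ^ m) := by rw [e4]; ring
      _ = C * X ^ β * M X * (τ ^ β') ^ m := by
          rw [← mul_pow, hτβ']
  -- key bound: k+1 ≤ D * (1/p)^β'
  set D : ℝ := C * X ^ β * M X * τ ^ β' with hD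
  have hD0 : 0 < D := by
    have : (0:ℝ) < τ ^ β' := Real.rpow_pos_of_pos hτ0 _
    have : (0:ℝ) < X ^ β := Real.rpow_pos_of_pos hX0 _
    positivity
  have hkey : ∀ k : ℕ, (k + 1 : ℝ) ≤ D * (1 / p (k + 1)) ^ β' := by
    intro k
    set y : ℝ := 1 / p (k + 1) with hy
    have hy1 : 1 ≤ y := by
      rw [hy]
      rw [le_one_div (by norm_num) (hp_pos k)]
      simpa using hp_le_one k
    have hy0 : 0 < y := lt_of_lt_of_le one_pos hy1
    have hex : ∃ m : ℕ, y ≤ τ ^ m * X := by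
      obtain ⟨n, hn⟩ := pow_unbounded_of_one_lt (y / X) hτ
      refine ⟨n, ?_⟩
      rw [div_lt_iff₀ hX0] at hn
      linarith
    set m := Nat.find hex with hm
    have hspec : y ≤ τ ^ m * X := Nat.find_spec hex
    -- bound (τ^β')^m ≤ τ^β' * y^β'
    have hτm : ((τ ^ β' : ℝ)) ^ m ≤ τ ^ β' * y ^ β' := by
      have hpow' : ((τ ^ m : ℝ)) ^ β' = (τ ^ β') ^ m := by
        rw [← Real.rpow_natCast τ m, ← Real.rpow_natCast (τ ^ β') m,
          ← Real.rpow_mul hτ0.le, ← Real.rpow_mul hτ0.le, mul_comm]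
      rcases Nat.eq_zero_or_pos m with h0 | h0
      · rw [h0]
        simp only [pow_zero]
        have h1 : (1:ℝ) ≤ τ ^ β' := Real.one_le_rpow hτ.le hβ'0.le
        have h2 : (1:ℝ) ≤ y ^ β' := Real.one_le_rpow hy1 hβ'0.le
        nlinarith
      · obtain ⟨j, hj⟩ := Nat.exists_eq_succ_of_ne_zero h0.ne'
        have hmin : ¬ (y ≤ τ ^ j * X) := Nat.find_min hex (by omega)
        push_neg at hmin
        have hτmlt : (τ : ℝ) ^ m ≤ τ * y := by
          have : (τ : ℝ) ^ m = τ * τ ^ j := by rw [hj, pow_succ]; ring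
          rw [this]
          have hXτj : τ ^ j * X < y := hmin
          have h1 : (τ:ℝ) ^ j ≤ τ ^ j * X := le_mul_of_one_le_right (by positivity) hX1
          nlinarith
        calc ((τ ^ β' : ℝ)) ^ m = ((τ ^ m : ℝ)) ^ β' := hpow'.symm
          _ ≤ ((τ * y : ℝ)) ^ β' := Real.rpow_le_rpow (by positivity) hτmlt hβ'0.le
          _ = τ ^ β' * y ^ β' := Real.mul_rpow hτ0.le hy0.le
    have hchain : (k + 1 : ℝ) ≤ C * X ^ β * M X * (τ ^ β') ^ m := by
      calc (k + 1 : ℝ) ≤ (({j : ℕ | 1 / p (j + 1) ≤ y}).ncard : ℝ) := hcount k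
        _ ≤ (({j : ℕ | 1 / p (j + 1) ≤ τ ^ m * X}).ncard : ℝ) := hν_mono _ _ hspec
        _ ≤ C * h (τ ^ m * X) := hνb _ (hgrid_ge m)
        _ ≤ C * X ^ β * M X * (τ ^ β') ^ m := hhgrid m
    have hpos : (0:ℝ) < C * X ^ β * M X := by
      have : (0:ℝ) < X ^ β := Real.rpow_pos_of_pos hX0 _
      positivity
    calc (k + 1 : ℝ) ≤ C * X ^ β * M X * (τ ^ β') ^ m := hchain
      _ ≤ C * X ^ β * M X * (τ ^ β' * y ^ β') := mul_le_mul_of_nonneg_left hτm hpos.le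
      _ = D * y ^ β' := by rw [hD]; ring
  -- convert to bound on p^s
  have hps : ∀ k : ℕ, p (k + 1) ^ s ≤ (D / (k + 1)) ^ (s / β') := by
    intro k
    have hk1 : (0:ℝ) < (k : ℝ) + 1 := by positivity
    have hpb : (0:ℝ) < p (k + 1) ^ β' := Real.rpow_pos_of_pos (hp_pos k) _
    have h1 : p (k + 1) ^ β' ≤ D / (k + 1) := by
      have hk := hkey k
      rw [one_div, Real.inv_rpow (hp_pos k).le] at hk
      have h2 : ((k : ℝ) + 1) * p (k + 1) ^ β' ≤ D := by
        calc ((k : ℝ) + 1) * p (k + 1) ^ β'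
            ≤ D * (p (k + 1) ^ β')⁻¹ * p (k + 1) ^ β' :=
              mul_le_mul_of_nonneg_right hk hpb.le
          _ = D := by field_simp
      rw [le_div_iff₀ hk1]
      linarith
    have hexp : β' * (s / β') = s := by field_simp
    have heq : p (k + 1) ^ s = (p (k + 1) ^ β') ^ (s / β') := by
      rw [← Real.rpow_mul (hp_pos k).le, hexp]
    rw [heq]
    exact Real.rpow_le_rpow hpb.le h1 (div_nonneg hs0.le hβ'0.le)
  have hsummable_bound : Summable (fun k : ℕ => (D / (k + 1 : ℝ)) ^ (s / β')) := by
    have hsb : 1 < s / β' := (one_lt_div hβ'0).mpr hβ's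
    have h1 : Summable (fun k : ℕ => ((k + 1 : ℝ)) ^ (-(s / β'))) := by
      have := Real.summable_nat_rpow (p := -(s / β')).mpr (by linarith)
      have h2 := (summable_nat_add_iff (f := fun n : ℕ => ((n : ℝ)) ^ (-(s / β'))) 1).mpr this
      apply h2.congr
      intro n
      push_cast
      ring_nf
    apply (h1.mul_left (D ^ (s / β'))).congr
    intro k
    have hk1 : (0:ℝ) ≤ (k : ℝ) + 1 := by positivity
    rw [Real.div_rpow hD0.le hk1, Real.rpow_neg hk1]; ring
  apply Summable.of_nonneg_of_le (fun k => (Real.rpow_pos_of_pos (hp_pos k) s).le) hps hsummable_bound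

end Aux

/-- In the noise-dominance regime `α > α'β`, if the tail of `ε` is dominated by a function
in `RV_{−α}` and the counting function `ν` is dominated by a function in `RV_β`, then for
every `δ ∈ [0, α/β − α')` the random series `Σ_ℓ p_ℓ ε_ℓ^{α'+δ}` converges almost
surely. -/
theorem noise_dominance_conditional_moment
    (α α' β : ℝ) (hα : 0 < α) (hα' : 0 < α') (hβ : β ∈ Set.Ioo (0:ℝ) 1)
    (hdom : α' * β < α)
    (p : ℕ → ℝ) (hp_pos : ∀ k : ℕ, 0 < p (k + 1))
    (hp_mono : ∀ k : ℕ, p (k + 2) ≤ p (k + 1))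
    (hp_sum : (∑' k : ℕ, p (k + 1)) = 1)
    (ν : ℝ → ℝ) (hν : ∀ x : ℝ, ν x = (({k : ℕ | 1 / p (k + 1) ≤ x}).ncard : ℝ))
    {Ω : Type*} [MeasurableSpace Ω] (P : Measure Ω) [IsProbabilityMeasure P]
    (ε : ℕ → Ω → ℝ≥0) (hεmeas : ∀ ℓ, Measurable (ε ℓ))
    (hεiid : iIndepFun ε P)
    (hεlaw : ∀ ℓ, Measure.map (ε ℓ) P = Measure.map (ε 0) P)
    (hFdom : ∃ g : ℝ → ℝ, RegularlyVarying g (-α) ∧ ∃ C > (0:ℝ), ∃ x₀ : ℝ,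
      ∀ x ≥ x₀, (P {ω | x < (ε 0 ω : ℝ)}).toReal ≤ C * g x)
    (hνdom : ∃ h : ℝ → ℝ, RegularlyVarying h β ∧ ∃ C > (0:ℝ), ∃ x₀ : ℝ,
      ∀ x ≥ x₀, ν x ≤ C * h x) :
    ∀ δ : ℝ, 0 ≤ δ → δ < α / β - α' →
      ∀ᵐ ω ∂P, Summable fun ℓ : ℕ => p (ℓ + 1) * ((ε ℓ ω : ℝ)) ^ (α' + δ) := by
  classical
  obtain ⟨hβ0, hβ1⟩ := hβ
  intro δ hδ0 hδlt
  set q : ℝ := α' + δ with hqdef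
  have hq0 : 0 < q := by rw [hqdef]; linarith
  have hqβ : q * β < α := by
    have h1 : q < α / β := by rw [hqdef]; linarith
    have h2 : q * β < (α / β) * β := mul_lt_mul_of_pos_right h1 hβ0
    have h3 : (α / β) * β = α := div_mul_cancel₀ α hβ0.ne'
    exact h3 ▸ h2
  have hβq : β < α / q := by
    rw [lt_div_iff₀ hq0]
    nlinarith
  set s : ℝ := min ((β + 1) / 2) ((β + α / q) / 2) with hsdef
  have hsβ : β < s := by
    apply lt_min
    · linarith
    · linarith
  have hs0 : 0 < s := lt_trans hβ0 hsβ
  have hs1 : s ≤ 1 := le_trans (min_le_left _ _) (by linarith)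
  set r : ℝ := q * s with hrdef
  have hr0 : 0 < r := mul_pos hq0 hs0
  have hrα : r < α := by
    have h1 : s < α / q := lt_of_le_of_lt (min_le_right _ _) (by linarith)
    have h2 : q * s < q * (α / q) := mul_lt_mul_of_pos_left h1 hq0
    have h3 : q * (α / q) = α := by rw [mul_comm]; exact div_mul_cancel₀ α hq0.ne'
    rw [hrdef]; exact h3 ▸ h2
  -- finite r-th moment
  obtain ⟨g, hgRV, C₁, hC₁, x₁, htail⟩ := hFdom
  have hM : ∫⁻ ω, ENNReal.ofReal (((ε 0 ω : ℝ)) ^ r) ∂P ≠ ⊤ :=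
    aux_moment_finite P (ε 0) (hεmeas 0) g α hα hgRV C₁ x₁ hC₁ htail r hr0 hrα
  -- summability of p^s
  obtain ⟨h, hhRV, C₂, hC₂, x₂, hνb⟩ := hνdom
  have hνb' : ∀ x ≥ x₂, (({k : ℕ | 1 / p (k + 1) ≤ x}).ncard : ℝ) ≤ C₂ * h x := by
    intro x hx
    have := hνb x hx
    rwa [hν x] at this
  have hpsum : Summable (fun k : ℕ => p (k + 1) ^ s) :=
    aux_p_summable p hp_pos hp_mono hp_sum β hβ0 h hhRV C₂ x₂ hC₂ hνb' s hsβ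
  -- measurability
  have hεq : ∀ (ℓ : ℕ) (a : ℝ), 0 < a → Measurable (fun ω => ((ε ℓ ω : ℝ)) ^ a) := by
    intro ℓ a ha
    have h1 : ∀ ω, ((ε ℓ ω : ℝ)) ^ a = ((ε ℓ ω ^ a : ℝ≥0) : ℝ) := by
      intro ω; rw [NNReal.coe_rpow]
    simp_rw [h1]
    exact measurable_coe_nnreal_real.comp
      ((NNReal.continuous_rpow_const ha.le).measurable.comp (hεmeas ℓ))
  set G : ℕ → Ω → ℝ≥0∞ := fun ℓ ω => ENNReal.ofReal (p (ℓ + 1) * ((ε ℓ ω : ℝ)) ^ q)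
    with hGdef
  have hGnonneg : ∀ (ℓ : ℕ) (ω : Ω), 0 ≤ p (ℓ + 1) * ((ε ℓ ω : ℝ)) ^ q := fun ℓ ω =>
    mul_nonneg (hp_pos ℓ).le (Real.rpow_nonneg (ε ℓ ω).coe_nonneg q)
  have hGmeas : ∀ ℓ, Measurable (G ℓ) := fun ℓ =>
    ENNReal.measurable_ofReal.comp (measurable_const.mul (hεq ℓ q hq0))
  set Y : ℕ → Ω → ℝ≥0∞ := fun ℓ ω => min (G ℓ ω) 1 with hYdef
  have hYmeas : ∀ ℓ, Measurable (Y ℓ) := fun ℓ => (hGmeas ℓ).min measurable_const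
  -- pointwise bound on Y
  have hYle : ∀ (ℓ : ℕ) (ω : Ω),
      Y ℓ ω ≤ ENNReal.ofReal (p (ℓ + 1) ^ s) * ENNReal.ofReal (((ε ℓ ω : ℝ)) ^ r) := by
    intro ℓ ω
    set u : ℝ := p (ℓ + 1) * ((ε ℓ ω : ℝ)) ^ q with hu
    have hu0 : 0 ≤ u := hGnonneg ℓ ω
    have hmin : Y ℓ ω = ENNReal.ofReal (min u 1) := by
      rw [hYdef]
      rcases le_total u 1 with hc | hc
      · rw [min_eq_left hc, hGdef]
        simp only []
        rw [min_eq_left]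
        rw [← ENNReal.ofReal_one]
        exact ENNReal.ofReal_le_ofReal hc
      · rw [min_eq_right hc, ENNReal.ofReal_one, hGdef]
        simp only []
        rw [min_eq_right]
        rw [← ENNReal.ofReal_one]
        exact ENNReal.ofReal_le_ofReal hc
    have hus : u ^ s = p (ℓ + 1) ^ s * ((ε ℓ ω : ℝ)) ^ r := by
      rw [hu, Real.mul_rpow (hp_pos ℓ).le (Real.rpow_nonneg (ε ℓ ω).coe_nonneg q),
        ← Real.rpow_mul (ε ℓ ω).coe_nonneg, ← hrdef]
    calc Y ℓ ω = ENNReal.ofReal (min u 1) := hmin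
      _ ≤ ENNReal.ofReal (u ^ s) := ENNReal.ofReal_le_ofReal (aux_min_le_rpow hu0 hs0 hs1)
      _ = ENNReal.ofReal (p (ℓ + 1) ^ s * ((ε ℓ ω : ℝ)) ^ r) := by rw [hus]
      _ = ENNReal.ofReal (p (ℓ + 1) ^ s) * ENNReal.ofReal (((ε ℓ ω : ℝ)) ^ r) :=
        ENNReal.ofReal_mul (Real.rpow_nonneg (hp_pos ℓ).le s)
  -- identical distribution
  have hlaw : ∀ ℓ, (∫⁻ ω, ENNReal.ofReal (((ε ℓ ω : ℝ)) ^ r) ∂P)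
      = ∫⁻ ω, ENNReal.ofReal (((ε 0 ω : ℝ)) ^ r) ∂P := by
    intro ℓ
    have hφ : Measurable (fun x : ℝ≥0 => ENNReal.ofReal (((x : ℝ)) ^ r)) := by
      apply ENNReal.measurable_ofReal.comp
      have h1 : ∀ x : ℝ≥0, ((x : ℝ)) ^ r = ((x ^ r : ℝ≥0) : ℝ) := by
        intro x; rw [NNReal.coe_rpow]
      simp_rw [h1]
      exact measurable_coe_nnreal_real.comp (NNReal.continuous_rpow_const hr0.le).measurable
    rw [← lintegral_map hφ (hεmeas ℓ), ← lintegral_map hφ (hεmeas 0), hεlaw ℓ]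
  -- integral bound
  have hYint : ∀ ℓ, (∫⁻ ω, Y ℓ ω ∂P)
      ≤ ENNReal.ofReal (p (ℓ + 1) ^ s) * ∫⁻ ω, ENNReal.ofReal (((ε 0 ω : ℝ)) ^ r) ∂P := by
    intro ℓ
    calc (∫⁻ ω, Y ℓ ω ∂P)
        ≤ ∫⁻ ω, ENNReal.ofReal (p (ℓ + 1) ^ s) * ENNReal.ofReal (((ε ℓ ω : ℝ)) ^ r) ∂P :=
          lintegral_mono (hYle ℓ)
      _ = ENNReal.ofReal (p (ℓ + 1) ^ s) * ∫⁻ ω, ENNReal.ofReal (((ε ℓ ω : ℝ)) ^ r) ∂P :=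
          lintegral_const_mul _ (ENNReal.measurable_ofReal.comp (hεq ℓ r hr0))
      _ = _ := by rw [hlaw ℓ]
  have htot : (∑' ℓ : ℕ, ∫⁻ ω, Y ℓ ω ∂P) ≠ ⊤ := by
    have h1 : (∑' ℓ : ℕ, ∫⁻ ω, Y ℓ ω ∂P)
        ≤ (∑' ℓ : ℕ, ENNReal.ofReal (p (ℓ + 1) ^ s))
            * ∫⁻ ω, ENNReal.ofReal (((ε 0 ω : ℝ)) ^ r) ∂P := by
      rw [← ENNReal.tsum_mul_right]
      exact ENNReal.tsum_le_tsum hYint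
    have h2 : (∑' ℓ : ℕ, ENNReal.ofReal (p (ℓ + 1) ^ s)) ≠ ⊤ := by
      rw [← ENNReal.ofReal_tsum_of_nonneg (fun k => Real.rpow_nonneg (hp_pos k).le s) hpsum]
      exact ENNReal.ofReal_ne_top
    exact ne_top_of_le_ne_top (ENNReal.mul_ne_top h2 hM) h1
  -- a.s. finiteness of the truncated series
  have hae1 : ∀ᵐ ω ∂P, (∑' ℓ : ℕ, Y ℓ ω) < ⊤ := by
    apply ae_lt_top (Measurable.ennreal_tsum hYmeas)
    rw [lintegral_tsum (fun ℓ => (hYmeas ℓ).aemeasurable)]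
    exact htot
  -- Borel–Cantelli
  set A : ℕ → Set Ω := fun ℓ => {ω | 1 < G ℓ ω} with hAdef
  have hPA : ∀ ℓ, P (A ℓ) ≤ ∫⁻ ω, Y ℓ ω ∂P := by
    intro ℓ
    have hsub : A ℓ ⊆ {ω | 1 ≤ Y ℓ ω} := by
      intro ω hω
      have hω' : 1 < G ℓ ω := hω
      show (1:ℝ≥0∞) ≤ min (G ℓ ω) 1
      exact le_min hω'.le le_rfl
    calc P (A ℓ) ≤ P {ω | 1 ≤ Y ℓ ω} := measure_mono hsub
      _ ≤ ∫⁻ ω, Y ℓ ω ∂P := by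
          have := mul_meas_ge_le_lintegral₀ (μ := P) (hYmeas ℓ).aemeasurable 1
          simpa using this
  have hlimsup : P (Filter.limsup A Filter.atTop) = 0 :=
    measure_limsup_atTop_eq_zero (ne_top_of_le_ne_top htot (ENNReal.tsum_le_tsum hPA))
  have hae2 : ∀ᵐ ω ∂P, ω ∉ Filter.limsup A Filter.atTop := by
    rw [MeasureTheory.ae_iff]
    simpa using hlimsup
  -- conclusion
  filter_upwards [hae1, hae2] with ω hω1 hω2
  rw [Filter.mem_limsup_iff_frequently_mem, Filter.not_frequently] at hω2
  obtain ⟨N, hN⟩ := hω2.exists_forall_of_atTop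
  have hGle : ∀ ℓ ≥ N, G ℓ ω ≤ 1 := by
    intro ℓ hℓ
    have := hN ℓ hℓ
    simpa [hAdef, not_lt] using this
  have hGsum : (∑' ℓ : ℕ, G ℓ ω) ≠ ⊤ := by
    have hle : ∀ ℓ, G ℓ ω ≤ Y ℓ ω + (if ℓ < N then G ℓ ω else 0) := by
      intro ℓ
      rcases lt_or_ge ℓ N with hc | hc
      · rw [if_pos hc]
        exact le_add_self
      · rw [if_neg (not_lt.mpr hc), add_zero, hYdef]
        exact le_min le_rfl (hGle ℓ hc)
    have h2 : (∑' ℓ : ℕ, (if ℓ < N then G ℓ ω else 0)) = ∑ ℓ ∈ Finset.range N, G ℓ ω := by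
      rw [tsum_eq_sum (s := Finset.range N) (fun b hb => if_neg (fun hbN => hb (Finset.mem_range.mpr hbN)))]
      exact Finset.sum_congr rfl (fun i hi => if_pos (Finset.mem_range.mp hi))
    have h3 : (∑' ℓ : ℕ, G ℓ ω) ≤ (∑' ℓ : ℕ, Y ℓ ω) + ∑ ℓ ∈ Finset.range N, G ℓ ω := by
      calc (∑' ℓ : ℕ, G ℓ ω) ≤ ∑' ℓ : ℕ, (Y ℓ ω + if ℓ < N then G ℓ ω else 0) :=
            ENNReal.tsum_le_tsum hle
        _ = (∑' ℓ : ℕ, Y ℓ ω) + ∑' ℓ : ℕ, (if ℓ < N then G ℓ ω else 0) := ENNReal.tsum_add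
        _ = _ := by rw [h2]
    have h4 : (∑ ℓ ∈ Finset.range N, G ℓ ω) ≠ ⊤ := by
      apply (ENNReal.sum_lt_top.mpr ?_).ne
      intro i _
      exact ENNReal.ofReal_lt_top
    exact ne_top_of_le_ne_top (ENNReal.add_ne_top.mpr ⟨hω1.ne, h4⟩) h3
  have hfinal : Summable (fun ℓ : ℕ => (G ℓ ω).toReal) := ENNReal.summable_toReal hGsum
  exact hfinal.congr (fun ℓ => ENNReal.toReal_ofReal (hGnonneg ℓ ω))
end
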